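/- arXiv:1709.01606 — 12 statements merged into one kernel-verified Lean document; each statement's English description precedes it below -/
import Mathlib

section
/- Let S = ⟨n₁, …, n_k⟩ be a numerical monoid whose generating set {n₁, …, n_k} is minimal and has k ≥ 2 elements. Then S contains no prime elements: for every nonzero x ∈ S there exist y, z ∈ S such that x divides y + z in S but x divides neither y nor z in S. -/
/-- The numerical monoid generated by `n 0, …, n (k-1)`. -/
def NumMon {k : ℕ} (n : Fin k → ℕ) : Set ℕ := {x | ∃ c : Fin k → ℕ, ∑ i, c i * n i = x}

/-- The generating set is minimal: no generator lies in the submonoid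
generated by the remaining generators. -/
def MinimalGens {k : ℕ} (n : Fin k → ℕ) : Prop :=
  ∀ i, ¬ ∃ c : Fin k → ℕ, c i = 0 ∧ ∑ j, c j * n j = n i

/-- `x` divides `y` in the set `S`. -/
def DvdIn (S : Set ℕ) (x y : ℕ) : Prop := ∃ z ∈ S, y = x + z

theorem numerical_monoid_no_primes {k : ℕ} (hk : 2 ≤ k) (n : Fin k → ℕ)
    (hpos : ∀ i, 0 < n i) (hmin : MinimalGens n)
    (x : ℕ) (hx : x ∈ NumMon n) (hx0 : x ≠ 0) :
    ∃ y ∈ NumMon n, ∃ z ∈ NumMon n,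
      DvdIn (NumMon n) x (y + z) ∧ ¬ DvdIn (NumMon n) x y ∧ ¬ DvdIn (NumMon n) x z := by
  classical
  obtain ⟨c, hc⟩ := hx
  have hex : ∃ i0, c i0 ≠ 0 := by
    by_contra h
    push_neg at h
    apply hx0
    rw [← hc]
    exact Finset.sum_eq_zero fun i _ => by simp [h i]
  obtain ⟨i0, hi0⟩ := hex
  have : Nontrivial (Fin k) := Fin.nontrivial_iff_two_le.mpr hk
  obtain ⟨j, hj⟩ := exists_ne i0
  have hmem : ∀ a : ℕ, a * n j ∈ NumMon n := fun a =>
    ⟨fun i => if i = j then a else 0, by simp [ite_mul]⟩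
  set P : ℕ → Prop := fun m => ∃ s ∈ NumMon n, m * n j = x + s with hPdef
  have hPx : P x := by
    refine ⟨(n j - 1) * x, ⟨fun i => (n j - 1) * c i, ?_⟩, ?_⟩
    · rw [← hc, Finset.mul_sum]
      exact Finset.sum_congr rfl fun i _ => by ring
    · have h1 : 1 ≤ n j := hpos j
      have : x * n j = x * 1 + x * (n j - 1) := by
        rw [← Nat.mul_add]
        congr 1
        omega
      rw [this]
      ring
  have hP : ∃ m, P m := ⟨x, hPx⟩
  have hP0 : ¬ P 0 := by
    rintro ⟨s, _, heq⟩
    simp at heq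
    omega
  have hP1 : ¬ P 1 := by
    rintro ⟨s, ⟨d, hd⟩, heq⟩
    set e : Fin k → ℕ := fun i => c i + d i with he
    have hesum : ∑ i, e i * n i = n j := by
      have : ∑ i, e i * n i = (∑ i, c i * n i) + ∑ i, d i * n i := by
        rw [← Finset.sum_add_distrib]
        exact Finset.sum_congr rfl fun i _ => by simp [he]; ring
      rw [this, hc, hd]
      omega
    by_cases hej : e j = 0
    · exact hmin j ⟨e, hej, hesum⟩
    · have hsub : ({i0, j} : Finset (Fin k)) ⊆ Finset.univ := Finset.subset_univ _
      have hle : ∑ i ∈ ({i0, j} : Finset (Fin k)), e i * n i ≤ ∑ i, e i * n i :=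
        Finset.sum_le_sum_of_subset hsub
      rw [Finset.sum_pair (Ne.symm hj), hesum] at hle
      have h1 : 1 ≤ e i0 := by simp [he]; omega
      have h2 : 1 ≤ e j := by omega
      have h3 : 1 ≤ n i0 := hpos i0
      have h4 : 1 ≤ n j := hpos j
      nlinarith [Nat.mul_le_mul h1 h3, Nat.mul_le_mul h2 h4]
  set m := Nat.find hP with hm
  have hms : P m := Nat.find_spec hP
  have hm0 : m ≠ 0 := fun h => hP0 (h ▸ hms)
  have hm1 : m ≠ 1 := fun h => hP1 (h ▸ hms)
  refine ⟨(m - 1) * n j, hmem _, n j, by simpa using hmem 1, ?_, ?_, ?_⟩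
  · obtain ⟨s, hs, heq⟩ := hms
    refine ⟨s, hs, ?_⟩
    have hkey : (m - 1) * n j + n j = m * n j := by
      have hle : n j ≤ m * n j := Nat.le_mul_of_pos_left _ (by omega)
      rw [Nat.sub_one_mul]
      omega
    rw [hkey, heq]
  · rintro ⟨s, hs, heq⟩
    exact Nat.find_min hP (show m - 1 < m by omega) ⟨s, hs, heq⟩
  · rintro ⟨s, hs, heq⟩
    exact hP1 ⟨s, hs, by simpa using heq⟩
end

section
/- The irreducible elements of the Chicken McNugget monoid M are exactly 6, 9, and 20, and M has no prime elements. -/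
/-- The Chicken McNugget monoid: numbers of the form 6a + 9b + 20c. -/
def McN : Set ℕ := {x | ∃ a b c : ℕ, 6 * a + 9 * b + 20 * c = x}

/-- `x` is irreducible in the set `S` (an additive submonoid of ℕ). -/
def IrreducibleIn (S : Set ℕ) (x : ℕ) : Prop :=
  x ∈ S ∧ x ≠ 0 ∧ ∀ y ∈ S, ∀ z ∈ S, x = y + z → y = 0 ∨ z = 0

lemma mcn_large (n : ℕ) (h : 44 ≤ n) : n ∈ McN := by
  induction n using Nat.strong_induction_on with
  | _ n ih =>
    rcases le_or_gt n 49 with h1 | h1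
    · interval_cases n
      · exact ⟨4, 0, 1, rfl⟩
      · exact ⟨0, 5, 0, rfl⟩
      · exact ⟨1, 0, 2, rfl⟩
      · exact ⟨0, 3, 1, rfl⟩
      · exact ⟨8, 0, 0, rfl⟩
      · exact ⟨0, 1, 2, rfl⟩
    · obtain ⟨a, b, c, hc⟩ := ih (n - 6) (by omega) (by omega)
      exact ⟨a + 1, b, c, by omega⟩

lemma not_mcn_43 : (43 : ℕ) ∉ McN := by
  rintro ⟨a, b, c, h⟩; omega

theorem mcnugget_irreducibles_and_no_primes :
    (∀ x : ℕ, IrreducibleIn McN x ↔ x = 6 ∨ x = 9 ∨ x = 20) ∧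
    (∀ x ∈ McN, x ≠ 0 → ∃ y ∈ McN, ∃ z ∈ McN,
      DvdIn McN x (y + z) ∧ ¬ DvdIn McN x y ∧ ¬ DvdIn McN x z) := by
  constructor
  · intro x
    constructor
    · rintro ⟨⟨a, b, c, hx⟩, hne, hsplit⟩
      rcases Nat.eq_zero_or_pos a with ha | ha
      · rcases Nat.eq_zero_or_pos b with hb | hb
        · rcases Nat.eq_zero_or_pos c with hc | hc
          · omega
          · -- c ≥ 1 : x = 20 + rest
            have := hsplit 20 ⟨0, 0, 1, rfl⟩ (6 * a + 9 * b + 20 * (c - 1))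
              ⟨a, b, c - 1, rfl⟩ (by omega)
            rcases this with h | h <;> omega
        · have := hsplit 9 ⟨0, 1, 0, rfl⟩ (6 * a + 9 * (b - 1) + 20 * c)
            ⟨a, b - 1, c, rfl⟩ (by omega)
          rcases this with h | h <;> omega
      · have := hsplit 6 ⟨1, 0, 0, rfl⟩ (6 * (a - 1) + 9 * b + 20 * c)
          ⟨a - 1, b, c, rfl⟩ (by omega)
        rcases this with h | h <;> omega
    · rintro (rfl | rfl | rfl)
      · refine ⟨⟨1, 0, 0, rfl⟩, by norm_num, ?_⟩
        rintro y ⟨a, b, c, hy⟩ z ⟨d, e, f, hz⟩ heq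
        have ha : a ≤ 1 := by omega
        have hb : b = 0 := by omega
        have hc : c = 0 := by omega
        subst hb hc
        interval_cases a <;> omega
      · refine ⟨⟨0, 1, 0, rfl⟩, by norm_num, ?_⟩
        rintro y ⟨a, b, c, hy⟩ z ⟨d, e, f, hz⟩ heq
        have ha : a ≤ 1 := by omega
        have hb : b ≤ 1 := by omega
        have hc : c = 0 := by omega
        subst hc
        interval_cases a <;> interval_cases b <;> omega
      · refine ⟨⟨0, 0, 1, rfl⟩, by norm_num, ?_⟩
        rintro y ⟨a, b, c, hy⟩ z ⟨d, e, f, hz⟩ heq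
        have ha : a ≤ 3 := by omega
        have hb : b ≤ 2 := by omega
        have hc : c ≤ 1 := by omega
        interval_cases a <;> interval_cases b <;> interval_cases c <;> omega
  · rintro x ⟨a, b, c, hx⟩ hne
    have habc : 1 ≤ a ∨ 1 ≤ b ∨ 1 ≤ c := by omega
    have hx6 : 6 ≤ x := by rcases habc with h | h | h <;> omega
    refine ⟨x + 43, mcn_large _ (by omega), x + 43, mcn_large _ (by omega),
      ⟨x + 86, mcn_large _ (by omega), by omega⟩, ?_, ?_⟩ <;>
    · rintro ⟨w, hw, hE⟩
      have : w = 43 := by omega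
      exact not_mcn_43 (this ▸ hw)
end

section
/- An element x of the Chicken McNugget monoid M has exactly one factorization (i.e., exactly one triple (a,b,c) ∈ ℕ³ with 6a + 9b + 20c = x) if and only if x ∈ {0, 6, 9, 12, 15, 20, 21, 26, 29, 32, 35, 40, 41, 46, 49, 52, 55, 61}. -/
theorem mcnugget_unique_factorization (x : ℕ) :
    (∃! t : ℕ × ℕ × ℕ, 6 * t.1 + 9 * t.2.1 + 20 * t.2.2 = x) ↔
    x ∈ ({0, 6, 9, 12, 15, 20, 21, 26, 29, 32, 35, 40, 41, 46, 49, 52, 55, 61} : Finset ℕ) := by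
  constructor
  · rintro ⟨⟨a, b, c⟩, ht, huniq⟩
    simp only at ht
    have ha : a ≤ 2 := by
      by_contra h
      have h2 := huniq (a - 3, b + 2, c) (by simp only; omega)
      simp only [Prod.mk.injEq] at h2
      omega
    have hb : b ≤ 1 := by
      by_contra h
      have h2 := huniq (a + 3, b - 2, c) (by simp only; omega)
      simp only [Prod.mk.injEq] at h2
      omega
    have hc : c ≤ 2 := by
      by_contra h
      have h2 := huniq (a + 10, b, c - 3) (by simp only; omega)
      simp only [Prod.mk.injEq] at h2
      omega
    simp only [Finset.mem_insert, Finset.mem_singleton]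
    interval_cases a <;> interval_cases b <;> interval_cases c <;> omega
  · intro h
    fin_cases h
    · exact ⟨(0,0,0), rfl, by rintro ⟨a,b,c⟩ ht; simp only [Prod.mk.injEq]; simp only at ht; have hc : c ≤ 3 := (by omega); interval_cases c <;> omega⟩
    · exact ⟨(1,0,0), rfl, by rintro ⟨a,b,c⟩ ht; simp only [Prod.mk.injEq]; simp only at ht; have hc : c ≤ 3 := (by omega); interval_cases c <;> omega⟩
    · exact ⟨(0,1,0), rfl, by rintro ⟨a,b,c⟩ ht; simp only [Prod.mk.injEq]; simp only at ht; have hc : c ≤ 3 := (by omega); interval_cases c <;> omega⟩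
    · exact ⟨(2,0,0), rfl, by rintro ⟨a,b,c⟩ ht; simp only [Prod.mk.injEq]; simp only at ht; have hc : c ≤ 3 := (by omega); interval_cases c <;> omega⟩
    · exact ⟨(1,1,0), rfl, by rintro ⟨a,b,c⟩ ht; simp only [Prod.mk.injEq]; simp only at ht; have hc : c ≤ 3 := (by omega); interval_cases c <;> omega⟩
    · exact ⟨(0,0,1), rfl, by rintro ⟨a,b,c⟩ ht; simp only [Prod.mk.injEq]; simp only at ht; have hc : c ≤ 3 := (by omega); interval_cases c <;> omega⟩
    · exact ⟨(2,1,0), rfl, by rintro ⟨a,b,c⟩ ht; simp only [Prod.mk.injEq]; simp only at ht; have hc : c ≤ 3 := (by omega); interval_cases c <;> omega⟩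
    · exact ⟨(1,0,1), rfl, by rintro ⟨a,b,c⟩ ht; simp only [Prod.mk.injEq]; simp only at ht; have hc : c ≤ 3 := (by omega); interval_cases c <;> omega⟩
    · exact ⟨(0,1,1), rfl, by rintro ⟨a,b,c⟩ ht; simp only [Prod.mk.injEq]; simp only at ht; have hc : c ≤ 3 := (by omega); interval_cases c <;> omega⟩
    · exact ⟨(2,0,1), rfl, by rintro ⟨a,b,c⟩ ht; simp only [Prod.mk.injEq]; simp only at ht; have hc : c ≤ 3 := (by omega); interval_cases c <;> omega⟩
    · exact ⟨(1,1,1), rfl, by rintro ⟨a,b,c⟩ ht; simp only [Prod.mk.injEq]; simp only at ht; have hc : c ≤ 3 := (by omega); interval_cases c <;> omega⟩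
    · exact ⟨(0,0,2), rfl, by rintro ⟨a,b,c⟩ ht; simp only [Prod.mk.injEq]; simp only at ht; have hc : c ≤ 3 := (by omega); interval_cases c <;> omega⟩
    · exact ⟨(2,1,1), rfl, by rintro ⟨a,b,c⟩ ht; simp only [Prod.mk.injEq]; simp only at ht; have hc : c ≤ 3 := (by omega); interval_cases c <;> omega⟩
    · exact ⟨(1,0,2), rfl, by rintro ⟨a,b,c⟩ ht; simp only [Prod.mk.injEq]; simp only at ht; have hc : c ≤ 3 := (by omega); interval_cases c <;> omega⟩
    · exact ⟨(0,1,2), rfl, by rintro ⟨a,b,c⟩ ht; simp only [Prod.mk.injEq]; simp only at ht; have hc : c ≤ 3 := (by omega); interval_cases c <;> omega⟩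
    · exact ⟨(2,0,2), rfl, by rintro ⟨a,b,c⟩ ht; simp only [Prod.mk.injEq]; simp only at ht; have hc : c ≤ 3 := (by omega); interval_cases c <;> omega⟩
    · exact ⟨(1,1,2), rfl, by rintro ⟨a,b,c⟩ ht; simp only [Prod.mk.injEq]; simp only at ht; have hc : c ≤ 3 := (by omega); interval_cases c <;> omega⟩
    · exact ⟨(2,1,2), rfl, by rintro ⟨a,b,c⟩ ht; simp only [Prod.mk.injEq]; simp only at ht; have hc : c ≤ 3 := (by omega); interval_cases c <;> omega⟩
end

section
/- Let S = ⟨n₁, …, n_k⟩ be a numerical monoid with minimal generators n₁ < n₂ < ⋯ < n_k. For every x ∈ S with x > n₁·n_k, one has L(x + n₁) = L(x) + 1, where L denotes maximum factorization length. -/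
/-- The set of factorization lengths of `x`. -/
def GLenSet {k : ℕ} (n : Fin k → ℕ) (x : ℕ) : Set ℕ :=
  {l | ∃ c : Fin k → ℕ, ∑ i, c i * n i = x ∧ ∑ i, c i = l}

/-- Maximum factorization length. -/
noncomputable def GLmax {k : ℕ} (n : Fin k → ℕ) (x : ℕ) : ℕ := sSup (GLenSet n x)

lemma count_fact {k : ℕ} {n : Fin k → ℕ} (hinj : Function.Injective n) :
    ∀ (L : List ℕ), (∀ a ∈ L, ∃ i, a = n i) →
      (∑ i, L.count (n i) * n i = L.sum ∧ ∑ i, L.count (n i) = L.length) := by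
  intro L
  induction L with
  | nil => simp
  | cons a T ih =>
    intro h
    obtain ⟨i₀, rfl⟩ := h a (by simp)
    obtain ⟨h1, h2⟩ := ih (fun b hb => h b (List.mem_cons_of_mem _ hb))
    have hc : ∀ i : Fin k, (n i₀ :: T).count (n i) = T.count (n i) + if i = i₀ then 1 else 0 := by
      intro i
      rw [List.count_cons]
      congr 1
      by_cases hi : i = i₀
      · simp [hi]
      · simp only [hi, if_false]
        simp only [beq_iff_eq, ite_eq_right_iff]
        exact fun hh => absurd (hinj hh).symm hi
    constructor
    · simp only [hc, add_mul, Finset.sum_add_distrib, h1, List.sum_cons, ite_mul, zero_mul,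
        one_mul, Finset.sum_ite_eq' Finset.univ i₀, Finset.mem_univ, if_true]
      omega
    · simp only [hc, Finset.sum_add_distrib, h2, List.length_cons,
        Finset.sum_ite_eq' Finset.univ i₀, Finset.mem_univ, if_true]

lemma fact_list : ∀ {k : ℕ} (n c : Fin k → ℕ),
    ∃ L : List ℕ, L.sum = ∑ i, c i * n i ∧ L.length = ∑ i, c i ∧
      ∀ a ∈ L, ∃ i, a = n i ∧ 0 < c i := by
  intro k
  induction k with
  | zero => intro n c; exact ⟨[], by simp, by simp, by simp⟩
  | succ m ih =>
    intro n c
    obtain ⟨L', h1, h2, h3⟩ := ih (n ∘ Fin.succ) (c ∘ Fin.succ)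
    refine ⟨List.replicate (c 0) (n 0) ++ L', ?_, ?_, ?_⟩
    · simp [List.sum_replicate, h1, Fin.sum_univ_succ, smul_eq_mul]
    · simp [h2, Fin.sum_univ_succ]
    · intro a ha
      rcases List.mem_append.1 ha with h | h
      · obtain ⟨hc0, rfl⟩ := List.mem_replicate.1 h
        exact ⟨0, rfl, Nat.pos_of_ne_zero hc0⟩
      · obtain ⟨i, hi, hci⟩ := h3 a h
        exact ⟨i.succ, hi, hci⟩

lemma sum_lb (m : ℕ) : ∀ (L : List ℕ), (∀ a ∈ L, m ≤ a) → L.length * m ≤ L.sum := by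
  intro L
  induction L with
  | nil => simp
  | cons a T ih =>
    intro h
    have h1 := ih (fun b hb => h b (List.mem_cons_of_mem _ hb))
    have h2 := h a (by simp)
    simp only [List.length_cons, List.sum_cons]
    nlinarith

theorem numerical_monoid_max_length_quasilinear {k : ℕ} (hk : 0 < k)
    (n : Fin k → ℕ) (hpos : ∀ i, 0 < n i) (hmono : StrictMono n)
    (hmin : MinimalGens n) (x : ℕ) (hx : x ∈ NumMon n)
    (hbig : n ⟨0, hk⟩ * n ⟨k - 1, by omega⟩ < x) :
    GLmax n (x + n ⟨0, hk⟩) = GLmax n x + 1 := by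
  classical
  have n0pos : 0 < n ⟨0, hk⟩ := hpos _
  have hinj := hmono.injective
  have hle : ∀ i : Fin k, n i ≤ n ⟨k - 1, by omega⟩ := by
    intro i
    refine hmono.monotone ?_
    simp only [Fin.le_def]
    have := i.isLt
    omega
  have hgt : ∀ i : Fin k, i ≠ ⟨0, hk⟩ → n ⟨0, hk⟩ < n i := by
    intro i hi
    refine hmono ?_
    simp only [Fin.lt_def]
    have : i.val ≠ 0 := fun h => hi (Fin.ext h)
    omega
  have hbdd : ∀ y : ℕ, BddAbove (GLenSet n y) := by
    intro y
    refine ⟨y, ?_⟩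
    rintro l ⟨c, hc, rfl⟩
    calc ∑ i, c i ≤ ∑ i, c i * n i :=
          Finset.sum_le_sum (fun i _ => Nat.le_mul_of_pos_right _ (hpos i))
      _ = y := hc
  have hsplit : ∀ (j : Fin k) (d : Fin k → ℕ),
      (∑ i, (d i + if i = j then 1 else 0) * n i = (∑ i, d i * n i) + n j)
      ∧ (∑ i, (d i + if i = j then 1 else 0) = (∑ i, d i) + 1) := by
    intro j d
    constructor
    · simp [add_mul, Finset.sum_add_distrib, ite_mul, Finset.sum_ite_eq']
    · simp [Finset.sum_add_distrib, Finset.sum_ite_eq']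
  have hxne : (GLenSet n x).Nonempty := by
    obtain ⟨c, hc⟩ := hx
    exact ⟨_, c, hc, rfl⟩
  obtain ⟨cx, hcx1, hcx2⟩ := Nat.sSup_mem hxne (hbdd x)
  have hmem1 : GLmax n x + 1 ∈ GLenSet n (x + n ⟨0, hk⟩) := by
    refine ⟨fun i => cx i + if i = ⟨0, hk⟩ then 1 else 0, ?_, ?_⟩
    · rw [(hsplit _ cx).1, hcx1]
    · rw [(hsplit _ cx).2, hcx2]
      rfl
  have hyne : (GLenSet n (x + n ⟨0, hk⟩)).Nonempty := ⟨_, hmem1⟩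
  have hge' : GLmax n x + 1 ≤ GLmax n (x + n ⟨0, hk⟩) := le_csSup (hbdd _) hmem1
  obtain ⟨c, hc1, hc2⟩ := Nat.sSup_mem hyne (hbdd _)
  -- `hc2 : ∑ i, c i = GLmax n (x + n ⟨0, hk⟩)` up to defeq
  have hc0 : 0 < c ⟨0, hk⟩ := by
    by_contra h0
    push_neg at h0
    have h0' : c ⟨0, hk⟩ = 0 := by omega
    obtain ⟨L, hLs, hLl, hLmem⟩ := fact_list n c
    have hLel : ∀ a ∈ L, n ⟨0, hk⟩ + 1 ≤ a := by
      intro a ha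
      obtain ⟨i, rfl, hci⟩ := hLmem a ha
      have hne : i ≠ ⟨0, hk⟩ := by
        rintro rfl
        omega
      have := hgt i hne
      omega
    have hllb : n ⟨0, hk⟩ + 1 ≤ L.length := by
      have h1 : x + n ⟨0, hk⟩ ≤ L.length * n ⟨k - 1, by omega⟩ := by
        rw [← hc1, hLl]
        calc ∑ i, c i * n i ≤ ∑ i, c i * n ⟨k - 1, by omega⟩ :=
              Finset.sum_le_sum (fun i _ => Nat.mul_le_mul_left _ (hle i))
          _ = (∑ i, c i) * n ⟨k - 1, by omega⟩ := (Finset.sum_mul _ _ _).symm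
      have h2 : n ⟨0, hk⟩ * n ⟨k - 1, by omega⟩ < L.length * n ⟨k - 1, by omega⟩ := by omega
      have h3 : n ⟨0, hk⟩ < L.length :=
        lt_of_mul_lt_mul_right h2 (Nat.zero_le _)
      omega
    have hcard : Fintype.card (Fin (n ⟨0, hk⟩)) < Fintype.card (Fin (n ⟨0, hk⟩ + 1)) := by simp
    obtain ⟨t₁, t₂, htne, hteq⟩ := Fintype.exists_ne_map_eq_of_card_lt
      (fun t : Fin (n ⟨0, hk⟩ + 1) =>
        (⟨(L.take t).sum % n ⟨0, hk⟩, Nat.mod_lt _ n0pos⟩ : Fin (n ⟨0, hk⟩))) hcard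
    have key : ∃ a b : ℕ, a < b ∧ b ≤ n ⟨0, hk⟩ ∧
        (L.take a).sum % n ⟨0, hk⟩ = (L.take b).sum % n ⟨0, hk⟩ := by
      have hv := congrArg Fin.val hteq
      simp only [] at hv
      rcases Ne.lt_or_gt htne with hlt | hlt
      · exact ⟨t₁, t₂, hlt, by have := t₂.isLt; omega, hv⟩
      · exact ⟨t₂, t₁, hlt, by have := t₁.isLt; omega, hv.symm⟩
    obtain ⟨a, b, hab, hbn, hmodeq⟩ := key
    have htake : L.take b = L.take a ++ (L.drop a).take (b - a) := by
      rw [← List.take_add]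
      congr 1
      omega
    have hsum2 : (L.take b).sum = (L.take a).sum + ((L.drop a).take (b - a)).sum := by
      rw [htake, List.sum_append]
    have h' : (L.take a).sum + ((L.drop a).take (b - a)).sum ≡ (L.take a).sum + 0
        [MOD n ⟨0, hk⟩] := by
      simpa [Nat.ModEq, ← hsum2] using hmodeq.symm
    have hdvd : n ⟨0, hk⟩ ∣ ((L.drop a).take (b - a)).sum :=
      (Nat.modEq_zero_iff_dvd).1 (Nat.ModEq.add_left_cancel' _ h')
    have hblen : ((L.drop a).take (b - a)).length = b - a := by
      rw [List.length_take, List.length_drop]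
      omega
    have hBel : ∀ a' ∈ (L.drop a).take (b - a), n ⟨0, hk⟩ + 1 ≤ a' := fun a' ha' =>
      hLel a' (List.mem_of_mem_drop (List.mem_of_mem_take ha'))
    have hBsum := sum_lb _ _ hBel
    rw [hblen] at hBsum
    obtain ⟨m, hm⟩ := hdvd
    have hmge : b - a + 1 ≤ m := by
      by_contra hcon
      push_neg at hcon
      have h1 : n ⟨0, hk⟩ * m ≤ n ⟨0, hk⟩ * (b - a) := Nat.mul_le_mul_left _ (by omega)
      have e1 : (b - a) * (n ⟨0, hk⟩ + 1) = n ⟨0, hk⟩ * (b - a) + (b - a) := by ring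
      have hq : 0 < b - a := by omega
      linarith
    have hsplitL : (L.take b).sum + (L.drop b).sum = L.sum := by
      rw [← List.sum_append, List.take_append_drop]
    have hL's : (L.take a ++ L.drop b ++ List.replicate m (n ⟨0, hk⟩)).sum
        = x + n ⟨0, hk⟩ := by
      simp only [List.sum_append, List.sum_replicate, smul_eq_mul]
      have hmn : m * n ⟨0, hk⟩ = ((L.drop a).take (b - a)).sum := by
        rw [hm, Nat.mul_comm]
      rw [hmn]
      rw [hLs, hc1] at hsplitL
      omega
    have hL'l : L.length + 1 ≤ (L.take a ++ L.drop b ++ List.replicate m (n ⟨0, hk⟩)).length := by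
      simp only [List.length_append, List.length_take, List.length_drop, List.length_replicate]
      omega
    have hL'mem : ∀ a' ∈ L.take a ++ L.drop b ++ List.replicate m (n ⟨0, hk⟩),
        ∃ i, a' = n i := by
      intro a' ha'
      simp only [List.mem_append, List.mem_replicate] at ha'
      rcases ha' with (h | h) | h
      · obtain ⟨i, hi, _⟩ := hLmem a' (List.mem_of_mem_take h)
        exact ⟨i, hi⟩
      · obtain ⟨i, hi, _⟩ := hLmem a' (List.mem_of_mem_drop h)
        exact ⟨i, hi⟩
      · exact ⟨⟨0, hk⟩, h.2⟩
    obtain ⟨hcount1, hcount2⟩ := count_fact hinj _ hL'mem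
    have hmem' : (L.take a ++ L.drop b ++ List.replicate m (n ⟨0, hk⟩)).length
        ∈ GLenSet n (x + n ⟨0, hk⟩) :=
      ⟨fun i => (L.take a ++ L.drop b ++ List.replicate m (n ⟨0, hk⟩)).count (n i),
        by rw [hcount1, hL's], hcount2⟩
    have hup : (L.take a ++ L.drop b ++ List.replicate m (n ⟨0, hk⟩)).length
        ≤ GLmax n (x + n ⟨0, hk⟩) := le_csSup (hbdd _) hmem'
    have hG : GLmax n (x + n ⟨0, hk⟩) = ∑ i, c i := hc2.symm
    omega
  -- now the upper bound
  have hcd : ∀ i, c i = (c i - if i = ⟨0, hk⟩ then 1 else 0) + if i = ⟨0, hk⟩ then 1 else 0 := by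
    intro i
    by_cases hi : i = ⟨0, hk⟩
    · subst hi
      have h1 : (if (⟨0, hk⟩ : Fin k) = ⟨0, hk⟩ then (1:ℕ) else 0) = 1 := if_pos rfl
      rw [h1]
      omega
    · simp [hi]
  have hcfun : c = fun i => (c i - if i = ⟨0, hk⟩ then 1 else 0) + if i = ⟨0, hk⟩ then 1 else 0 :=
    funext hcd
  have hA : (∑ i, (c i - if i = ⟨0, hk⟩ then 1 else 0) * n i) + n ⟨0, hk⟩ = x + n ⟨0, hk⟩ := by
    rw [← hc1]
    conv_rhs => rw [hcfun]
    exact ((hsplit _ _).1).symm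
  have hB : (∑ i, (c i - if i = ⟨0, hk⟩ then 1 else 0)) + 1 = ∑ i, c i := by
    conv_rhs => rw [hcfun]
    exact ((hsplit _ _).2).symm
  have hmemx : (∑ i, (c i - if i = ⟨0, hk⟩ then 1 else 0)) ∈ GLenSet n x :=
    ⟨_, by omega, rfl⟩
  have hlex : (∑ i, (c i - if i = ⟨0, hk⟩ then 1 else 0)) ≤ GLmax n x :=
    le_csSup (hbdd x) hmemx
  have hGy : GLmax n (x + n ⟨0, hk⟩) = ∑ i, c i := hc2.symm
  omega
end

section
/- Let S = ⟨n₁, …, n_k⟩ be a numerical monoid with minimal generators n₁ < n₂ < ⋯ < n_k. For every x ∈ S with x > n_{k−1}·n_k, one has ℓ(x + n_k) = ℓ(x) + 1, where ℓ denotes minimum factorization length. -/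
/-- Minimum factorization length. -/
noncomputable def GLmin {k : ℕ} (n : Fin k → ℕ) (x : ℕ) : ℕ := sInf (GLenSet n x)


/-! Adding one copy of `n_k` to a minimal factorization of `x` bounds `ℓ(x + n_k) ≤ ℓ(x) + 1`.
Conversely, a minimal factorization of `x + n_k` must use `n_k`, which gives the reverse
inequality after removing it. Otherwise all its parts are at most `n_{k-1}`, so it has more than
`n_k` parts; by pigeonhole on prefix sums modulo `n_k`, some `q ≤ n_k` of them add up to `m · n_k`
with `m < q`, and trading them for `m` copies of `n_k` gives a shorter factorization. -/

open Multiset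

theorem List.exists_sublist_dvd_sum_map {α : Type*} (f : α → ℕ) {N : ℕ} (hN : 0 < N)
    {l : List α} (hl : N ≤ l.length) :
    ∃ t : List α, t.Sublist l ∧ 0 < t.length ∧ t.length ≤ N ∧ N ∣ (t.map f).sum := by
  obtain ⟨a, ha, b, hb, hne, hmod⟩ := Finset.exists_ne_map_eq_of_card_lt_of_maps_to
    (s := Finset.range (N + 1)) (t := Finset.range N) (by simp)
    (f := fun j => ((l.take j).map f).sum % N)
    (fun j _ => Finset.mem_range.2 (Nat.mod_lt _ hN))
  rw [Finset.mem_range] at ha hb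
  wlog hab : a < b generalizing a b
  · exact this b hb a ha hne.symm hmod.symm (by omega)
  refine ⟨(l.take b).drop a, (List.drop_sublist _ _).trans (List.take_sublist _ _),
    by simp; omega, by simp; omega, ?_⟩
  have hsplit : ((l.take b).map f).sum
      = ((l.take a).map f).sum + (((l.take b).drop a).map f).sum := by
    have : l.take a = (l.take b).take a := by rw [List.take_take, min_eq_left hab.le]
    rw [← List.sum_append, ← List.map_append, this, List.take_append_drop]
  have hmod' : ((l.take a).map f).sum + 0 ≡
      ((l.take a).map f).sum + (((l.take b).drop a).map f).sum [MOD N] := by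
    rw [← hsplit]; exact hmod
  exact Nat.modEq_zero_iff_dvd.1 (Nat.ModEq.add_left_cancel' _ hmod').symm

theorem Multiset.exists_le_dvd_sum_map {α : Type*} (f : α → ℕ) {N : ℕ} (hN : 0 < N)
    {s : Multiset α} (hs : N ≤ card s) :
    ∃ t ≤ s, 0 < card t ∧ card t ≤ N ∧ N ∣ (t.map f).sum := by
  induction s using Quotient.inductionOn with
  | h l =>
    obtain ⟨t, hsub, hpos, hle, hdvd⟩ := l.exists_sublist_dvd_sum_map f hN hs
    exact ⟨t, coe_le.2 hsub.subperm, hpos, hle, by simpa using hdvd⟩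

theorem Multiset.exists_card_lt_sum_map_eq {α : Type*} [DecidableEq α] (n : α → ℕ) {K : α}
    (hK : 0 < n K) {s : Multiset α} (hlt : ∀ i ∈ s, n i < n K) (hcard : n K ≤ card s) :
    ∃ s' : Multiset α, (s'.map n).sum = (s.map n).sum ∧ card s' < card s := by
  obtain ⟨t, hts, ht0, -, m, hm⟩ := s.exists_le_dvd_sum_map n hK hcard
  have hm_lt : m < card t := by
    have : (t.map n).sum < card t * n K := by
      simpa using sum_lt_sum_of_nonempty (card_pos.1 ht0) fun i hi => hlt i (mem_of_le hts hi)
    rw [hm, mul_comm] at this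
    exact Nat.lt_of_mul_lt_mul_right this
  have hsplit : (s.map n).sum = ((s - t).map n).sum + (t.map n).sum := by
    rw [← sum_add, ← map_add, tsub_add_cancel_of_le hts]
  refine ⟨s - t + replicate m K, ?_, ?_⟩
  · simp [hsplit, hm, mul_comm]
  · rw [card_add, card_sub hts, card_replicate]
    have := card_le_card hts
    omega

theorem Multiset.exists_card_lt_sum_map_eq_of_notMem {α : Type*} [DecidableEq α] (n : α → ℕ)
    {K : α} {B : ℕ} (hB : ∀ i ≠ K, n i ≤ B) (hBK : B < n K) {s : Multiset α} (hKs : K ∉ s)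
    (hbig : B * n K < (s.map n).sum) :
    ∃ s' : Multiset α, (s'.map n).sum = (s.map n).sum ∧ card s' < card s := by
  have hle : ∀ i ∈ s, n i ≤ B := fun i hi => hB i (ne_of_mem_of_not_mem hi hKs)
  have hcard : n K ≤ card s := by
    by_contra! hlt
    have : (s.map n).sum ≤ card s * B := by
      simpa using sum_le_card_nsmul (s.map n) B (by simpa using hle)
    have : card s * B ≤ B * n K := by nlinarith
    omega
  exact s.exists_card_lt_sum_map_eq n (by omega) (fun i hi => (hle i hi).trans_lt hBK) hcard

section

variable {k : ℕ} {n : Fin k → ℕ}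

theorem mem_GLenSet_iff {x l : ℕ} :
    l ∈ GLenSet n x ↔ ∃ s : Multiset (Fin k), (s.map n).sum = x ∧ card s = l := by
  constructor
  · rintro ⟨c, rfl, rfl⟩
    refine ⟨∑ i, c i • {i}, ?_, by simp⟩
    rw [← coe_mapAddMonoidHom, map_sum, ← coe_sumAddMonoidHom, map_sum]
    simp [Multiset.map_nsmul, Multiset.sum_nsmul]
  · rintro ⟨s, rfl, rfl⟩
    refine ⟨fun i => s.count i, ?_, by simp⟩
    rw [Finset.sum_multiset_map_count]
    exact (Finset.sum_subset (Finset.subset_univ _) (by simp_all)).symm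

theorem mem_NumMon_iff {x : ℕ} : x ∈ NumMon n ↔ ∃ s : Multiset (Fin k), (s.map n).sum = x :=
  ⟨fun ⟨c, hc⟩ => (mem_GLenSet_iff.1 ⟨c, hc, rfl⟩).imp fun _ h => h.1,
    fun ⟨s, hs⟩ => (mem_GLenSet_iff.2 ⟨s, hs, rfl⟩).imp fun _ h => h.1⟩

theorem GLmin_le_card {x : ℕ} {s : Multiset (Fin k)} (hs : (s.map n).sum = x) :
    GLmin n x ≤ card s :=
  Nat.sInf_le (mem_GLenSet_iff.2 ⟨s, hs, rfl⟩)

theorem exists_card_eq_GLmin {x : ℕ} {s : Multiset (Fin k)} (hs : (s.map n).sum = x) :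
    ∃ t : Multiset (Fin k), (t.map n).sum = x ∧ card t = GLmin n x :=
  mem_GLenSet_iff.1 (Nat.sInf_mem ⟨_, mem_GLenSet_iff.2 ⟨s, hs, rfl⟩⟩)

theorem GLmin_add_le {x : ℕ} {s : Multiset (Fin k)} (hs : (s.map n).sum = x) (i : Fin k) :
    GLmin n (x + n i) ≤ GLmin n x + 1 := by
  obtain ⟨t, rfl, ht⟩ := exists_card_eq_GLmin hs
  rw [← ht, ← card_cons i t]
  exact GLmin_le_card (by simp [add_comm])

theorem GLmin_add_one_le_card_of_mem {x : ℕ} {i : Fin k} {s : Multiset (Fin k)}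
    (hs : (s.map n).sum = x + n i) (hi : i ∈ s) : GLmin n x + 1 ≤ card s := by
  rw [← card_erase_add_one hi]
  refine Nat.add_le_add_right (GLmin_le_card ?_) 1
  rw [← sum_map_erase hi, add_comm] at hs
  exact Nat.add_right_cancel hs

end

theorem numerical_monoid_min_length_quasilinear {k : ℕ} (hk : 2 ≤ k)
    (n : Fin k → ℕ) (hmono : StrictMono n)
    (x : ℕ) (hx : x ∈ NumMon n)
    (hbig : n ⟨k - 2, by omega⟩ * n ⟨k - 1, by omega⟩ < x) :
    GLmin n (x + n ⟨k - 1, by omega⟩) = GLmin n x + 1 := by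
  set K : Fin k := ⟨k - 1, by omega⟩
  set J : Fin k := ⟨k - 2, by omega⟩
  have hJK : n J < n K := hmono (Fin.mk_lt_mk.2 (by omega))
  have hle : ∀ i ≠ K, n i ≤ n J := fun i hi => hmono.monotone <| Fin.le_def.2 <| by
    have : (i : ℕ) ≠ k - 1 := fun h => hi (Fin.ext h)
    show (i : ℕ) ≤ k - 2
    omega
  obtain ⟨s₀, hs₀⟩ := mem_NumMon_iff.1 hx
  refine le_antisymm (GLmin_add_le hs₀ K) ?_
  obtain ⟨s, hs, hcard⟩ :=
    exists_card_eq_GLmin (n := n) (x := x + n K) (s := K ::ₘ s₀) (by simp [hs₀, add_comm])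
  have hKs : K ∈ s := by
    by_contra hKs
    obtain ⟨s', hs', hlt⟩ :=
      s.exists_card_lt_sum_map_eq_of_notMem n hle hJK hKs (by rw [hs]; omega)
    have := GLmin_le_card (hs'.trans hs)
    omega
  exact hcard ▸ GLmin_add_one_le_card_of_mem hs hKs
end

section
/- The elasticity of the Chicken McNugget monoid M is 10/3; that is, sup{L(x)/ℓ(x) : x ∈ M, x ≠ 0} = 10/3. -/
/-- The set of factorization lengths of `x` in the McNugget monoid. -/
def LenSet (x : ℕ) : Set ℕ := {l | ∃ a b c : ℕ, 6 * a + 9 * b + 20 * c = x ∧ a + b + c = l}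

/-- Maximum factorization length. -/
noncomputable def Lmax (x : ℕ) : ℕ := sSup (LenSet x)

/-- Minimum factorization length. -/
noncomputable def Lmin (x : ℕ) : ℕ := sInf (LenSet x)

lemma lenset_bounds {x l : ℕ} (h : l ∈ LenSet x) : 6 * l ≤ x ∧ x ≤ 20 * l := by
  obtain ⟨a, b, c, hx, hl⟩ := h
  omega

lemma lenset_bdd (x : ℕ) : BddAbove (LenSet x) := by
  refine ⟨x, fun l hl => ?_⟩
  have := lenset_bounds hl
  omega

lemma Lmax_bound {x : ℕ} (hx : x ∈ McN) : 6 * Lmax x ≤ x := by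
  obtain ⟨a, b, c, h⟩ := hx
  have hne : (LenSet x).Nonempty := ⟨a + b + c, a, b, c, h, rfl⟩
  have : Lmax x ∈ LenSet x := Nat.sSup_mem hne (lenset_bdd x)
  exact (lenset_bounds this).1

lemma Lmin_mem {x : ℕ} (hx : x ∈ McN) : Lmin x ∈ LenSet x := by
  obtain ⟨a, b, c, h⟩ := hx
  exact Nat.sInf_mem ⟨a + b + c, a, b, c, h, rfl⟩

lemma Lmin_pos {x : ℕ} (hx : x ∈ McN) (hx0 : x ≠ 0) : 0 < Lmin x := by
  have := (lenset_bounds (Lmin_mem hx)).2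
  omega

theorem mcnugget_elasticity :
    sSup {r : ℝ | ∃ x ∈ McN, x ≠ 0 ∧ r = (Lmax x : ℝ) / (Lmin x : ℝ)} = 10 / 3 := by
  apply le_antisymm
  · apply csSup_le
    · refine ⟨(Lmax 60 : ℝ) / (Lmin 60 : ℝ), 60, ⟨10, 0, 0, by norm_num⟩, by norm_num, rfl⟩
    · rintro r ⟨x, hx, hx0, rfl⟩
      have h1 := Lmax_bound hx
      have h2 := (lenset_bounds (Lmin_mem hx)).2
      have h3 := Lmin_pos hx hx0
      have key : 3 * Lmax x ≤ 10 * Lmin x := by omega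
      rw [div_le_div_iff₀ (by exact_mod_cast h3) (by norm_num : (0:ℝ) < 3)]
      have : (3 : ℝ) * Lmax x ≤ 10 * Lmin x := by exact_mod_cast key
      linarith
  · have hmem : (60 : ℕ) ∈ McN := ⟨10, 0, 0, by norm_num⟩
    have hLmax : Lmax 60 = 10 := by
      apply le_antisymm
      · have : Lmax 60 ∈ LenSet 60 :=
          Nat.sSup_mem ⟨10, 10, 0, 0, by norm_num, by norm_num⟩ (lenset_bdd 60)
        have := (lenset_bounds this).1
        omega
      · exact le_csSup (lenset_bdd 60) ⟨10, 0, 0, by norm_num, by norm_num⟩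
    have hLmin : Lmin 60 = 3 := by
      apply le_antisymm
      · exact Nat.sInf_le ⟨0, 0, 3, by norm_num, by norm_num⟩
      · have := (lenset_bounds (Lmin_mem hmem)).2
        omega
    have : (10 : ℝ) / 3 ∈ {r : ℝ | ∃ x ∈ McN, x ≠ 0 ∧ r = (Lmax x : ℝ) / (Lmin x : ℝ)} := by
      refine ⟨60, hmem, by norm_num, ?_⟩
      rw [hLmax, hLmin]; norm_num
    apply le_csSup _ this
    refine ⟨10/3, ?_⟩
    rintro r ⟨x, hx, hx0, rfl⟩
    have h1 := Lmax_bound hx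
    have h2 := (lenset_bounds (Lmin_mem hx)).2
    have h3 := Lmin_pos hx hx0
    have key : 3 * Lmax x ≤ 10 * Lmin x := by omega
    rw [div_le_div_iff₀ (by exact_mod_cast h3) (by norm_num : (0:ℝ) < 3)]
    have : (3 : ℝ) * Lmax x ≤ 10 * Lmin x := by exact_mod_cast key
    linarith
end

section
/- Let S = ⟨n₁, …, n_k⟩ be a numerical monoid with minimal generators n₁ < n₂ < ⋯ < n_k and gcd(n₁, …, n_k) = 1, and let F be the Frobenius number of S. For every x ∈ S with x·(n₂ − n₁) > n₁·(F + n₂), one has ω(x + n₁) = ω(x) + 1. -/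
/-- `x` divides `y` in the numerical monoid generated by `n`. -/
def GDvd {k : ℕ} (n : Fin k → ℕ) (x y : ℕ) : Prop := ∃ z ∈ NumMon n, y = x + z

/-- `m` is an ω-bound for `x`: whenever `x` divides a sum of elements of the monoid,
it divides a subsum of at most `m` of them. -/
def GOmegaBound {k : ℕ} (n : Fin k → ℕ) (x m : ℕ) : Prop :=
  ∀ (t : ℕ) (f : Fin t → ℕ), (∀ i, f i ∈ NumMon n) → GDvd n x (∑ i, f i) →
    ∃ T : Finset (Fin t), T.card ≤ m ∧ GDvd n x (∑ i ∈ T, f i)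

/-- The ω-primality of `x` in the numerical monoid generated by `n`. -/
noncomputable def GOmega {k : ℕ} (n : Fin k → ℕ) (x : ℕ) : ℕ := sInf {m | GOmegaBound n x m}

namespace OmegaAux

variable {k : ℕ} (n : Fin k → ℕ)

/-- weighted sum of a multiplicity vector -/
def sig (c : Fin k → ℕ) : ℕ := ∑ j, c j * n j

lemma sig_mem (c : Fin k → ℕ) : sig n c ∈ NumMon n := ⟨c, rfl⟩

lemma zero_mem : (0:ℕ) ∈ NumMon n := ⟨0, by simp⟩

lemma add_mem {a b : ℕ} (ha : a ∈ NumMon n) (hb : b ∈ NumMon n) : a + b ∈ NumMon n := by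
  obtain ⟨c, hc⟩ := ha; obtain ⟨d, hd⟩ := hb
  exact ⟨c + d, by simp [Pi.add_apply, add_mul, Finset.sum_add_distrib, hc, hd]⟩

lemma gen_mem (j : Fin k) : n j ∈ NumMon n := by
  refine ⟨fun i => if i = j then 1 else 0, ?_⟩
  simp [ite_mul, Finset.sum_ite_eq']

lemma nsmul_mem (m : ℕ) {a : ℕ} (ha : a ∈ NumMon n) : m * a ∈ NumMon n := by
  obtain ⟨c, rfl⟩ := ha
  exact ⟨fun j => m * c j, by rw [Finset.mul_sum]; simp [mul_assoc]⟩

lemma gdvd_add {y w z : ℕ} (h : GDvd n y w) (hz : z ∈ NumMon n) : GDvd n y (w + z) := by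
  obtain ⟨u, hu, rfl⟩ := h
  exact ⟨u + z, add_mem n hu hz, by ring⟩

/-- A (strongly minimal) bullet for `y`. -/
def VBul (y : ℕ) (c : Fin k → ℕ) : Prop :=
  GDvd n y (sig n c) ∧ ∀ d : Fin k → ℕ, d ≤ c → d ≠ c → ¬ GDvd n y (sig n d)

lemma gsum_update (w : Fin k → ℕ → ℕ) (c : Fin k → ℕ) (i0 : Fin k) (v : ℕ) :
    ∑ j, w j (if j = i0 then v else c j) = (∑ j ∈ Finset.univ \ {i0}, w j (c j)) + w i0 v := by
  rw [Finset.sum_eq_sum_sdiff_singleton_add (Finset.mem_univ i0)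
    (fun j => w j (if j = i0 then v else c j))]
  congr 1
  · refine Finset.sum_congr rfl (fun j hj => ?_)
    have hne : j ≠ i0 := by simpa using (Finset.mem_sdiff.mp hj).2
    rw [if_neg hne]
  · rw [if_pos rfl]

lemma gsum_self (w : Fin k → ℕ → ℕ) (c : Fin k → ℕ) (i0 : Fin k) :
    ∑ j, w j (c j) = (∑ j ∈ Finset.univ \ {i0}, w j (c j)) + w i0 (c i0) :=
  Finset.sum_eq_sum_sdiff_singleton_add (Finset.mem_univ i0) _

lemma sig_bump (i0 : Fin k) (c : Fin k → ℕ) :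
    sig n (fun j => if j = i0 then c i0 + 1 else c j) = sig n c + n i0 := by
  rw [sig, sig, gsum_update (fun j v => v * n j) c i0 (c i0 + 1),
    gsum_self (fun j v => v * n j) c i0]
  ring

lemma sig_drop (i0 : Fin k) {c : Fin k → ℕ} (h : c i0 ≠ 0) :
    sig n c = sig n (fun j => if j = i0 then c i0 - 1 else c j) + n i0 := by
  rw [sig, sig, gsum_update (fun j v => v * n j) c i0 (c i0 - 1),
    gsum_self (fun j v => v * n j) c i0]
  obtain ⟨s, hs⟩ := Nat.exists_eq_succ_of_ne_zero h
  rw [hs]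
  simp [Nat.succ_mul]
  ring

lemma sz_bump (i0 : Fin k) (c : Fin k → ℕ) :
    ∑ j, (if j = i0 then c i0 + 1 else c j) = (∑ j, c j) + 1 := by
  rw [gsum_update (fun _ v => v) c i0 (c i0 + 1), gsum_self (fun _ v => v) c i0]
  ring

lemma sz_drop (i0 : Fin k) {c : Fin k → ℕ} (h : c i0 ≠ 0) :
    ∑ j, c j = (∑ j, (if j = i0 then c i0 - 1 else c j)) + 1 := by
  rw [gsum_update (fun _ v => v) c i0 (c i0 - 1), gsum_self (fun _ v => v) c i0]
  omega

lemma sum_lt_of_le_of_ne {c d : Fin k → ℕ} (h : d ≤ c) (hne : d ≠ c) :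
    ∑ j, d j < ∑ j, c j := by
  obtain ⟨a, ha⟩ := Function.ne_iff.mp hne
  exact Finset.sum_lt_sum (fun j _ => h j) ⟨a, Finset.mem_univ a, lt_of_le_of_ne (h a) ha⟩

/-- realize a multiplicity vector as a list of atoms -/
lemma exists_realization (c : Fin k → ℕ) :
    ∃ g : Fin (∑ j, c j) → Fin k,
      ∀ j, (Finset.univ.filter fun x => g x = j).card = c j := by
  have hcard : Fintype.card (Σ j : Fin k, Fin (c j)) = ∑ j, c j := by simp
  let e : (Σ j : Fin k, Fin (c j)) ≃ Fin (∑ j, c j) := Fintype.equivFinOfCardEq hcard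
  refine ⟨fun x => (e.symm x).1, fun j => ?_⟩
  have h1 : (Finset.univ.filter fun x => (e.symm x).1 = j).card
      = (Finset.univ.filter fun p : (Σ j', Fin (c j')) => p.1 = j).card := by
    refine Finset.card_bij' (fun x _ => e.symm x) (fun p _ => e p) ?_ ?_ ?_ ?_
    · intro a ha
      simp only [Finset.mem_filter, Finset.mem_univ, true_and] at ha ⊢
      exact ha
    · intro p hp
      simp only [Finset.mem_filter, Finset.mem_univ, true_and] at hp ⊢
      simpa using hp
    · intro a _; simp
    · intro p _; simp
  rw [h1, ← Fintype.card_fin (c j), ← Finset.card_univ]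
  refine Finset.card_bij'
    (fun (p : Σ j', Fin (c j')) (hp : p ∈ Finset.univ.filter fun p : (Σ j', Fin (c j')) => p.1 = j)
       => Fin.cast (congrArg c (Finset.mem_filter.mp hp).2) p.2)
    (fun (z : Fin (c j)) _ => ⟨j, z⟩) ?_ ?_ ?_ ?_
  · intro a ha; exact Finset.mem_univ _
  · intro z hz; simp
  · rintro ⟨j', z⟩ hp
    obtain h := (Finset.mem_filter.mp hp).2
    simp only at h
    subst h
    rfl
  · intro z hz; rfl

lemma sum_fiber (t : ℕ) (g : Fin t → Fin k) (T : Finset (Fin t)) :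
    ∑ x ∈ T, n (g x) = sig n (fun j => (T.filter fun x => g x = j).card) := by
  rw [sig, ← Finset.sum_fiberwise_of_maps_to (fun x _ => Finset.mem_univ (g x)) (fun x => n (g x))]
  refine Finset.sum_congr rfl (fun j _ => ?_)
  have h1 : ∑ x ∈ T.filter (fun x => g x = j), n (g x) = ∑ _x ∈ T.filter (fun x => g x = j), n j :=
    Finset.sum_congr rfl (fun x hx => by rw [(Finset.mem_filter.mp hx).2])
  rw [h1, Finset.sum_const, smul_eq_mul, mul_comm]

lemma bound_to_bullet {y m : ℕ} (hB : GOmegaBound n y m) {c : Fin k → ℕ} (hc : VBul n y c) :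
    ∑ j, c j ≤ m := by
  obtain ⟨g, hg⟩ := exists_realization c
  have hsum : ∑ x, n (g x) = sig n c := by
    rw [sum_fiber]
    unfold sig
    refine Finset.sum_congr rfl (fun j _ => ?_)
    simp only [hg j]
  obtain ⟨T, hT1, hT2⟩ := hB _ (fun x => n (g x)) (fun x => gen_mem n (g x))
    (by rw [hsum]; exact hc.1)
  have hTd : ∑ x ∈ T, n (g x) = sig n (fun j => (T.filter fun x => g x = j).card) :=
    sum_fiber n _ g T
  have hdc : (fun j => (T.filter fun x => g x = j).card) ≤ c := by
    intro j
    simp only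
    rw [← hg j]
    exact Finset.card_le_card (Finset.filter_subset_filter _ (Finset.subset_univ T))
  by_cases hdeq : (fun j => (T.filter fun x => g x = j).card) = c
  · have hcardT : T.card = ∑ j, (T.filter fun x => g x = j).card :=
      Finset.card_eq_sum_card_fiberwise (fun x _ => Finset.mem_univ (g x))
    have : ∑ j, c j = T.card := by
      rw [hcardT]
      exact Finset.sum_congr rfl (fun j _ => by rw [← congrFun hdeq j])
    omega
  · exact absurd (by rw [← hTd]; exact hT2) (hc.2 _ hdc hdeq)

lemma exists_split {ι : Type} [DecidableEq ι] (s : Finset ι) (b : ι → Fin k → ℕ) :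
    ∀ d : Fin k → ℕ, (∀ j, d j ≤ ∑ i ∈ s, b i j) →
    ∃ e : ι → Fin k → ℕ, (∀ i j, e i j ≤ b i j) ∧ (∀ j, ∑ i ∈ s, e i j = d j)
      ∧ ∀ i ∉ s, e i = 0 := by
  induction s using Finset.induction_on with
  | empty =>
    intro d hd
    refine ⟨fun _ _ => 0, fun i j => Nat.zero_le _, fun j => ?_, fun i _ => rfl⟩
    have := hd j
    simp only [Finset.sum_empty] at this ⊢
    omega
  | @insert a s ha ih =>
    intro d hd
    obtain ⟨e', he'1, he'2, he'3⟩ := ih (fun j => d j - min (d j) (b a j)) (fun j => by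
      have := hd j
      rw [Finset.sum_insert ha] at this
      show d j - min (d j) (b a j) ≤ ∑ i ∈ s, b i j
      omega)
    refine ⟨fun i j => if i = a then min (d j) (b a j) else e' i j,
      fun i j => ?_, fun j => ?_, fun i hi => ?_⟩
    · by_cases h : i = a
      · simp [h]
      · simp only [if_neg h]; exact he'1 i j
    · rw [Finset.sum_insert ha]
      beta_reduce
      rw [if_pos rfl]
      have h2 : ∑ i ∈ s, (if i = a then min (d j) (b a j) else e' i j) = ∑ i ∈ s, e' i j := by
        refine Finset.sum_congr rfl (fun i hi => ?_)
        rw [if_neg (by rintro rfl; exact ha hi)]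
      rw [h2, he'2 j]
      omega
    · simp only [Finset.mem_insert, not_or] at hi
      funext j
      beta_reduce
      rw [if_neg hi.1]
      exact congrFun (he'3 i hi.2) j

lemma exists_min_bullet {y : ℕ} (C : Fin k → ℕ) (h : GDvd n y (sig n C)) :
    ∃ c : Fin k → ℕ, c ≤ C ∧ VBul n y c := by
  set A : Set ℕ := {sz | ∃ d : Fin k → ℕ, d ≤ C ∧ GDvd n y (sig n d) ∧ (∑ j, d j) = sz} with hA
  have hne : A.Nonempty := ⟨∑ j, C j, C, le_refl C, h, rfl⟩
  obtain ⟨d₀, hd₀C, hd₀D, hd₀sz⟩ := Nat.sInf_mem hne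
  refine ⟨d₀, hd₀C, hd₀D, fun d hdle hdne hdD => ?_⟩
  have h1 : ∑ j, d j ∈ A := ⟨d, le_trans hdle hd₀C, hdD, rfl⟩
  have h2 : ∑ j, d j < sInf A := by
    have := sum_lt_of_le_of_ne hdle hdne
    omega
  exact Nat.notMem_of_lt_sInf h2 h1

lemma bullet_to_bound {y m : ℕ} (h : ∀ c : Fin k → ℕ, VBul n y c → ∑ j, c j ≤ m) :
    GOmegaBound n y m := by
  intro t f hf hd
  choose cf hcf using hf
  have hC : sig n (fun j => ∑ i, cf i j) = ∑ i, f i := by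
    unfold sig
    calc ∑ j, (∑ i, cf i j) * n j = ∑ j, ∑ i, cf i j * n j :=
          Finset.sum_congr rfl (fun j _ => Finset.sum_mul _ _ _)
      _ = ∑ i, ∑ j, cf i j * n j := Finset.sum_comm
      _ = ∑ i, f i := Finset.sum_congr rfl (fun i _ => hcf i)
  obtain ⟨c₀, hc₀C, hb₀⟩ := exists_min_bullet n (fun j => ∑ i, cf i j) (by rw [hC]; exact hd)
  have hsz : ∑ j, c₀ j ≤ m := h c₀ hb₀
  obtain ⟨e, he1, he2, he3⟩ := exists_split Finset.univ cf c₀ (fun j => hc₀C j)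
  refine ⟨Finset.univ.filter (fun i => e i ≠ 0), ?_, ?_⟩
  · -- card bound
    have hcard : (Finset.univ.filter (fun i => e i ≠ 0)).card
        ≤ ∑ i ∈ Finset.univ.filter (fun i => e i ≠ 0), ∑ j, e i j := by
      rw [Finset.card_eq_sum_ones]
      refine Finset.sum_le_sum (fun i hi => ?_)
      have : e i ≠ 0 := (Finset.mem_filter.mp hi).2
      obtain ⟨j, hj⟩ := Function.ne_iff.mp this
      have : 1 ≤ e i j := Nat.pos_of_ne_zero hj
      calc 1 ≤ e i j := this
        _ ≤ ∑ j', e i j' := Finset.single_le_sum (fun _ _ => Nat.zero_le _) (Finset.mem_univ j)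
    have hfull : ∑ i ∈ Finset.univ.filter (fun i => e i ≠ 0), ∑ j, e i j
        = ∑ i, ∑ j, e i j := by
      refine Finset.sum_subset (Finset.filter_subset _ _) (fun i _ hi => ?_)
      have : e i = 0 := by
        by_contra hne
        exact hi (Finset.mem_filter.mpr ⟨Finset.mem_univ i, hne⟩)
      simp [this]
    have hswap : ∑ i, ∑ j, e i j = ∑ j, c₀ j := by
      rw [Finset.sum_comm]
      exact Finset.sum_congr rfl (fun j _ => he2 j)
    omega
  · -- divisibility
    have hTsum : ∑ i ∈ Finset.univ.filter (fun i => e i ≠ 0), f i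
        = sig n (fun j => ∑ i ∈ Finset.univ.filter (fun i => e i ≠ 0), cf i j) := by
      unfold sig
      calc ∑ i ∈ Finset.univ.filter (fun i => e i ≠ 0), f i
          = ∑ i ∈ Finset.univ.filter (fun i => e i ≠ 0), ∑ j, cf i j * n j :=
            Finset.sum_congr rfl (fun i _ => (hcf i).symm)
        _ = ∑ j, ∑ i ∈ Finset.univ.filter (fun i => e i ≠ 0), cf i j * n j := Finset.sum_comm
        _ = ∑ j, (∑ i ∈ Finset.univ.filter (fun i => e i ≠ 0), cf i j) * n j :=
            Finset.sum_congr rfl (fun j _ => (Finset.sum_mul _ _ _).symm)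
    have hge : ∀ j, c₀ j ≤ ∑ i ∈ Finset.univ.filter (fun i => e i ≠ 0), cf i j := by
      intro j
      have h1 : c₀ j = ∑ i ∈ Finset.univ.filter (fun i => e i ≠ 0), e i j := by
        rw [← he2 j]
        refine (Finset.sum_subset (Finset.filter_subset _ _) (fun i _ hi => ?_)).symm
        have : e i = 0 := by
          by_contra hne
          exact hi (Finset.mem_filter.mpr ⟨Finset.mem_univ i, hne⟩)
        simp [this]
      rw [h1]
      exact Finset.sum_le_sum (fun i _ => he1 i j)
    rw [hTsum]
    have hdecomp : (fun j => ∑ i ∈ Finset.univ.filter (fun i => e i ≠ 0), cf i j)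
        = c₀ + (fun j => (∑ i ∈ Finset.univ.filter (fun i => e i ≠ 0), cf i j) - c₀ j) := by
      funext j
      have := hge j
      simp only [Pi.add_apply]
      omega
    rw [hdecomp]
    have hsigadd : sig n (c₀ + (fun j => (∑ i ∈ Finset.univ.filter (fun i => e i ≠ 0), cf i j) - c₀ j))
        = sig n c₀ + sig n (fun j => (∑ i ∈ Finset.univ.filter (fun i => e i ≠ 0), cf i j) - c₀ j) := by
      unfold sig
      rw [← Finset.sum_add_distrib]
      exact Finset.sum_congr rfl (fun j _ => by simp [Pi.add_apply, add_mul])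
    rw [hsigadd]
    exact gdvd_add n hb₀.1 (sig_mem n _)

/-- upper bound on sig of a bullet via any element of its support -/
lemma sig_ub {F y : ℕ} (hFub : ∀ z, z ∉ NumMon n → z ≤ F) {c : Fin k → ℕ}
    (hb : VBul n y c) {j0 : Fin k} (hj0 : c j0 ≠ 0) : sig n c ≤ y + F + n j0 := by
  have hdle : (fun j => if j = j0 then c j0 - 1 else c j) ≤ c := by
    intro j
    by_cases h : j = j0
    · subst h; simp
    · simp [if_neg h]
  have hdne : (fun j => if j = j0 then c j0 - 1 else c j) ≠ c := by
    intro h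
    have := congrFun h j0
    simp at this
    omega
  have hnd := hb.2 _ hdle hdne
  have hsd := sig_drop n j0 hj0
  by_contra hh
  push_neg at hh
  have h2 : sig n (fun j => if j = j0 then c j0 - 1 else c j) - y ∉ NumMon n := by
    intro hz
    exact hnd ⟨_, hz, by omega⟩
  have := hFub _ h2
  omega

/-- Claim B : a bullet avoiding the smallest generator has size at most any n₀-multiple bound -/
lemma avoid_bullet (i0 i1 : Fin k) (hlt : n i0 < n i1) (hmono : Monotone n)
    (h2nd : ∀ j : Fin k, j ≠ i0 → n i1 ≤ n j)
    {F y : ℕ} (hFub : ∀ z, z ∉ NumMon n → z ≤ F)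
    (hbig : n i0 * (F + n i1) < y * (n i1 - n i0))
    {c : Fin k → ℕ} (hc0 : c i0 = 0) (hb : VBul n y c) {mm : ℕ}
    (hmmD : GDvd n y (mm * n i0)) :
    ∑ j, c j ≤ mm := by
  by_cases hct : ∑ j, c j = 0
  · omega
  have hTne : (Finset.univ.filter fun j => c j ≠ 0).Nonempty := by
    obtain ⟨j, _, hj⟩ := Finset.exists_ne_zero_of_sum_ne_zero hct
    exact ⟨j, Finset.mem_filter.mpr ⟨Finset.mem_univ j, hj⟩⟩
  set j0 := (Finset.univ.filter fun j => c j ≠ 0).min' hTne with hj0def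
  have hj0mem := (Finset.univ.filter fun j => c j ≠ 0).min'_mem hTne
  have hj0 : c j0 ≠ 0 := (Finset.mem_filter.mp hj0mem).2
  have hj0min : ∀ j, c j ≠ 0 → j0 ≤ j := fun j hj =>
    Finset.min'_le _ j (Finset.mem_filter.mpr ⟨Finset.mem_univ j, hj⟩)
  have hlb : (∑ j, c j) * n j0 ≤ sig n c := by
    rw [Finset.sum_mul, sig]
    refine Finset.sum_le_sum (fun j _ => ?_)
    by_cases h : c j = 0
    · simp [h]
    · exact Nat.mul_le_mul_left _ (hmono (hj0min j h))
  have hub : sig n c ≤ y + F + n j0 := sig_ub n hFub hb hj0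
  have hn1j0 : n i1 ≤ n j0 := h2nd j0 (fun h => hj0 (by rw [h, hc0]))
  have hyub : y ≤ mm * n i0 := by
    obtain ⟨z, hz, he⟩ := hmmD
    omega
  have ht1 : 1 ≤ ∑ j, c j := Nat.pos_of_ne_zero hct
  obtain ⟨s, hs⟩ : ∃ s, ∑ j, c j = s + 1 := ⟨(∑ j, c j) - 1, by omega⟩
  -- (s+1) * n j0 ≤ y + F + n j0, so s * n i1 ≤ s * n j0 ≤ y + F
  have h4 : s * n i1 ≤ y + F := by
    have h5 : s * n j0 + n j0 ≤ y + F + n j0 := by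
      calc s * n j0 + n j0 = (s + 1) * n j0 := by ring
        _ ≤ sig n c := by rw [← hs]; exact hlb
        _ ≤ y + F + n j0 := hub
    have h6 : s * n i1 ≤ s * n j0 := Nat.mul_le_mul_left _ hn1j0
    omega
  have hfinal : (s + 1) * (n i0 * n i1) < mm * (n i0 * n i1) := by
    have hstep : y * (n i1 - n i0) + y * n i0 = y * n i1 := by
      rw [← Nat.mul_add]
      congr 1
      omega
    calc (s + 1) * (n i0 * n i1) = (s * n i1) * n i0 + n i0 * n i1 := by ring
      _ ≤ (y + F) * n i0 + n i0 * n i1 := by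
          exact Nat.add_le_add_right (Nat.mul_le_mul_right _ h4) _
      _ = n i0 * (F + n i1) + y * n i0 := by ring
      _ < y * (n i1 - n i0) + y * n i0 := Nat.add_lt_add_right hbig _
      _ = y * n i1 := hstep
      _ ≤ (mm * n i0) * n i1 := Nat.mul_le_mul_right _ hyub
      _ = mm * (n i0 * n i1) := by ring
  rw [hs]
  by_contra hcon
  push_neg at hcon
  have hle : mm ≤ s + 1 := by omega
  exact absurd hfinal (not_lt.mpr (Nat.mul_le_mul_right _ hle))

/-- the pure bullet made of m₀ copies of the smallest generator -/
lemma pure_bullet (i0 : Fin k) {y m0 : ℕ} (hmem : GDvd n y (m0 * n i0))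
    (hmin : ∀ j, j < m0 → ¬ GDvd n y (j * n i0)) :
    VBul n y (fun j => if j = i0 then m0 else 0) := by
  have hsig : ∀ v, sig n (fun j => if j = i0 then v else 0) = v * n i0 := by
    intro v
    rw [sig, gsum_update (fun j u => u * n j) (fun _ => 0) i0 v]
    simp
  constructor
  · rw [hsig]; exact hmem
  · intro d hdle hdne
    have hd0 : ∀ j, j ≠ i0 → d j = 0 := by
      intro j hj
      have := hdle j
      simpa [if_neg hj] using this
    have hdi0 : d i0 ≤ m0 := by
      have := hdle i0
      simpa using this
    have hdlt : d i0 < m0 := by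
      rcases Nat.lt_or_ge (d i0) m0 with h | h
      · exact h
      · exfalso
        apply hdne
        funext j
        by_cases hj : j = i0
        · subst hj; simp; omega
        · simp [if_neg hj, hd0 j hj]
    have hsigd : sig n d = d i0 * n i0 := by
      rw [sig, gsum_self (fun j u => u * n j) d i0]
      have : ∑ j ∈ Finset.univ \ {i0}, d j * n j = 0 := by
        refine Finset.sum_eq_zero (fun j hj => ?_)
        have : j ≠ i0 := by simpa using (Finset.mem_sdiff.mp hj).2
        simp [hd0 j this]
      omega
    rw [hsigd]
    exact hmin _ hdlt

/-- adding one copy of the smallest generator to a bullet containing it -/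
lemma bullet_succ (i0 : Fin k) {x : ℕ} {c : Fin k → ℕ} (hb : VBul n x c) (h0 : c i0 ≠ 0) :
    VBul n (x + n i0) (fun j => if j = i0 then c i0 + 1 else c j) := by
  have hsig : sig n (fun j => if j = i0 then c i0 + 1 else c j) = sig n c + n i0 :=
    sig_bump n i0 c
  constructor
  · obtain ⟨z, hz, he⟩ := hb.1
    exact ⟨z, hz, by omega⟩
  · intro d hdle hdne hD
    by_cases hd0 : d i0 = 0
    · have hdc : d ≤ c := by
        intro j
        by_cases h : j = i0
        · rw [h, hd0]; exact Nat.zero_le _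
        · have := hdle j
          simpa [if_neg h] using this
      have hdnec : d ≠ c := by
        intro h
        exact h0 (by rw [← h]; exact hd0)
      obtain ⟨z, hz, he⟩ := hD
      exact hb.2 d hdc hdnec ⟨n i0 + z, add_mem n (gen_mem n i0) hz, by omega⟩
    · have hsigd : sig n d = sig n (fun j => if j = i0 then d i0 - 1 else d j) + n i0 :=
        sig_drop n i0 hd0
      have hd'c : (fun j => if j = i0 then d i0 - 1 else d j) ≤ c := by
        intro j
        by_cases h : j = i0
        · subst h
          have := hdle j
          simp at this ⊢
          omega
        · have := hdle j
          simpa [if_neg h] using this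
      have hd'ne : (fun j => if j = i0 then d i0 - 1 else d j) ≠ c := by
        intro h
        apply hdne
        funext j
        by_cases hj : j = i0
        · subst hj
          have := congrFun h j
          simp at this ⊢
          omega
        · have := congrFun h j
          simp only [if_neg hj] at this ⊢
          exact this
      obtain ⟨z, hz, he⟩ := hD
      exact hb.2 _ hd'c hd'ne ⟨z, hz, by omega⟩

/-- removing one copy of the smallest generator from a bullet containing it -/
lemma bullet_pred (i0 : Fin k) {x : ℕ} {c : Fin k → ℕ}
    (hb : VBul n (x + n i0) c) (h0 : c i0 ≠ 0) :
    VBul n x (fun j => if j = i0 then c i0 - 1 else c j) := by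
  have hsig : sig n c = sig n (fun j => if j = i0 then c i0 - 1 else c j) + n i0 :=
    sig_drop n i0 h0
  constructor
  · obtain ⟨z, hz, he⟩ := hb.1
    exact ⟨z, hz, by omega⟩
  · intro d hdle hdne hD
    have hsigd : sig n (fun j => if j = i0 then d i0 + 1 else d j) = sig n d + n i0 :=
      sig_bump n i0 d
    have hd2c : (fun j => if j = i0 then d i0 + 1 else d j) ≤ c := by
      intro j
      by_cases h : j = i0
      · subst h
        have := hdle j
        simp at this ⊢
        omega
      · have := hdle j
        simpa [if_neg h] using this
    have hd2ne : (fun j => if j = i0 then d i0 + 1 else d j) ≠ c := by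
      intro h
      apply hdne
      funext j
      by_cases hj : j = i0
      · subst hj
        have := congrFun h j
        simp at this ⊢
        omega
      · have := congrFun h j
        simp only [if_neg hj] at this ⊢
        exact this
    obtain ⟨z, hz, he⟩ := hD
    exact hb.2 _ hd2c hd2ne ⟨z, hz, by omega⟩

/-- global size bound for bullets -/
lemma size_bound {N F y : ℕ} (htop : ∀ j, n j ≤ N) (hpos : ∀ j, 0 < n j)
    (hFub : ∀ z, z ∉ NumMon n → z ≤ F) {c : Fin k → ℕ} (hb : VBul n y c) :
    ∑ j, c j ≤ y + F + N := by
  by_cases hct : ∑ j, c j = 0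
  · omega
  obtain ⟨j0, _, hj0⟩ := Finset.exists_ne_zero_of_sum_ne_zero hct
  have hub : sig n c ≤ y + F + n j0 := sig_ub n hFub hb hj0
  have hlb : ∑ j, c j ≤ sig n c := by
    rw [sig]
    refine Finset.sum_le_sum (fun j _ => ?_)
    exact Nat.le_mul_of_pos_right _ (hpos j)
  have := htop j0
  omega

end OmegaAux

theorem numerical_monoid_omega_quasilinear {k : ℕ} (hk : 2 ≤ k)
    (n : Fin k → ℕ) (hpos : ∀ i, 0 < n i) (hmono : StrictMono n)
    (hmin : MinimalGens n) (hgcd : Finset.univ.gcd n = 1)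
    (F : ℕ) (hF : IsGreatest {m : ℕ | 0 < m ∧ m ∉ NumMon n} F)
    (x : ℕ) (hx : x ∈ NumMon n)
    (hbig : n ⟨0, by omega⟩ * (F + n ⟨1, by omega⟩) < x * (n ⟨1, by omega⟩ - n ⟨0, by omega⟩)) :
    GOmega n (x + n ⟨0, by omega⟩) = GOmega n x + 1 := by
  open OmegaAux in
  have h0k : 0 < k := by omega
  have h1k : 1 < k := by omega
  set i0 : Fin k := ⟨0, h0k⟩ with hi0
  set i1 : Fin k := ⟨1, h1k⟩ with hi1
  have hbig' : n i0 * (F + n i1) < x * (n i1 - n i0) := hbig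
  show GOmega n (x + n i0) = GOmega n x + 1
  -- basic facts
  have hlt01 : n i0 < n i1 := hmono (by simp [hi0, hi1, Fin.lt_def])
  have hx0 : 0 < x := by
    rcases Nat.eq_zero_or_pos x with h | h
    · subst h; simp at hbig'
    · exact h
  have hFub : ∀ z, z ∉ NumMon n → z ≤ F := by
    intro z hz
    by_cases h : z = 0
    · subst h; exact absurd (zero_mem n) hz
    · exact hF.2 ⟨Nat.pos_of_ne_zero h, hz⟩
  have h2nd : ∀ j : Fin k, j ≠ i0 → n i1 ≤ n j := by
    intro j hj
    refine hmono.monotone ?_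
    have : j.val ≠ 0 := fun h => hj (Fin.ext (by simp [hi0, h]))
    simp [hi1, Fin.le_def]
    omega
  have hmonoM : Monotone n := hmono.monotone
  -- the minimal multiple of n i0 divisible by x
  have hJx : GDvd n x (x * n i0) := by
    refine ⟨(n i0 - 1) * x, nsmul_mem n _ hx, ?_⟩
    have h1 : 0 < n i0 := hpos i0
    calc x * n i0 = x * ((n i0 - 1) + 1) := by rw [Nat.sub_add_cancel h1]
      _ = x + (n i0 - 1) * x := by ring
  set m0 : ℕ := sInf {j | GDvd n x (j * n i0)} with hm0def
  have hm0 : GDvd n x (m0 * n i0) := by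
    have h1 : sInf {j | GDvd n x (j * n i0)} ∈ {j | GDvd n x (j * n i0)} :=
      Nat.sInf_mem ⟨x, hJx⟩
    rw [← hm0def] at h1
    exact h1
  have hm0min : ∀ j, j < m0 → ¬ GDvd n x (j * n i0) := by
    intro j hj
    have h1 : j ∉ {j | GDvd n x (j * n i0)} :=
      Nat.notMem_of_lt_sInf (by rw [← hm0def]; exact hj)
    exact h1
  have hm01 : 1 ≤ m0 := by
    by_contra h
    push_neg at h
    interval_cases m0
    obtain ⟨z, hz, he⟩ := hm0
    simp at he
    omega
  -- pure bullet
  have hpure : VBul n x (fun j => if j = i0 then m0 else 0) := pure_bullet n i0 hm0 hm0min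
  have hpuresz : ∑ j, (if j = i0 then m0 else 0) = m0 := by
    simp [Finset.sum_ite_eq']
  -- bound sets are nonempty
  set itop : Fin k := ⟨k - 1, by omega⟩ with hitop
  have htop : ∀ j, n j ≤ n itop := by
    intro j
    refine hmono.monotone ?_
    simp [hitop, Fin.le_def]
    omega
  have hbKx : GOmegaBound n x (x + F + n itop) :=
    bullet_to_bound n (fun c hb => size_bound n htop hpos hFub hb)
  have hbKx' : GOmegaBound n (x + n i0) ((x + n i0) + F + n itop) :=
    bullet_to_bound n (fun c hb => size_bound n htop hpos hFub hb)
  -- omega values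
  have hω₀mem : GOmegaBound n x (GOmega n x) := by
    have h1 : sInf {m | GOmegaBound n x m} ∈ {m | GOmegaBound n x m} := Nat.sInf_mem ⟨_, hbKx⟩
    exact h1
  have hω₁mem : GOmegaBound n (x + n i0) (GOmega n (x + n i0)) := by
    have h1 : sInf {m | GOmegaBound n (x + n i0) m} ∈ {m | GOmegaBound n (x + n i0) m} :=
      Nat.sInf_mem ⟨_, hbKx'⟩
    exact h1
  have hm0ω : m0 ≤ GOmega n x := by
    have := bound_to_bullet n hω₀mem hpure
    omega
  have hω₀pos : 1 ≤ GOmega n x := le_trans hm01 hm0ω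
  -- a maximal bullet for x containing i0
  have hexist : ∃ c : Fin k → ℕ, VBul n x c ∧ (∑ j, c j) = GOmega n x ∧ c i0 ≠ 0 := by
    have hnotb : ¬ GOmegaBound n x (GOmega n x - 1) := by
      have h1 : GOmega n x - 1 < sInf {m | GOmegaBound n x m} :=
        show GOmega n x - 1 < GOmega n x by omega
      have h2 : GOmega n x - 1 ∉ {m | GOmegaBound n x m} := Nat.notMem_of_lt_sInf h1
      exact h2
    have hexb : ∃ c : Fin k → ℕ, VBul n x c ∧ ¬ (∑ j, c j ≤ GOmega n x - 1) := by
      by_contra h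
      push_neg at h
      exact hnotb (bullet_to_bound n (fun c hb => h c hb))
    obtain ⟨c₁, hb₁, hsz₁⟩ := hexb
    have hle₁ : ∑ j, c₁ j ≤ GOmega n x := bound_to_bullet n hω₀mem hb₁
    have heq₁ : ∑ j, c₁ j = GOmega n x := by omega
    by_cases hc₁0 : c₁ i0 = 0
    · have := avoid_bullet n i0 i1 hlt01 hmonoM h2nd hFub hbig' hc₁0 hb₁ hm0
      have hm0eq : m0 = GOmega n x := by omega
      refine ⟨(fun j => if j = i0 then m0 else 0), hpure, by rw [hpuresz]; omega, ?_⟩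
      show (if i0 = i0 then m0 else 0) ≠ 0
      rw [if_pos rfl]
      omega
    · exact ⟨c₁, hb₁, heq₁, hc₁0⟩
  obtain ⟨c₂, hb₂, hsz₂, h0₂⟩ := hexist
  -- lower bound : ω₀ + 1 ≤ ω₁
  have hlow : GOmega n x + 1 ≤ GOmega n (x + n i0) := by
    have hbump : VBul n (x + n i0) (fun j => if j = i0 then c₂ i0 + 1 else c₂ j) :=
      bullet_succ n i0 hb₂ h0₂
    have := bound_to_bullet n hω₁mem hbump
    have hszb : ∑ j, (if j = i0 then c₂ i0 + 1 else c₂ j) = (∑ j, c₂ j) + 1 := sz_bump i0 c₂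
    omega
  -- upper bound : ω₁ ≤ ω₀ + 1
  have hupp : GOmega n (x + n i0) ≤ GOmega n x + 1 := by
    have hmem : GOmegaBound n (x + n i0) (GOmega n x + 1) := by
      refine bullet_to_bound n (fun c hb => ?_)
      by_cases h0 : c i0 = 0
      · -- avoid bullet for x + n i0
        have hbig'' : n i0 * (F + n i1) < (x + n i0) * (n i1 - n i0) :=
          Nat.lt_of_lt_of_le hbig' (Nat.mul_le_mul_right _ (by omega))
        have hm1D : GDvd n (x + n i0) ((m0 + 1) * n i0) := by
          obtain ⟨z, hz, he⟩ := hm0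
          refine ⟨z, hz, ?_⟩
          calc (m0 + 1) * n i0 = m0 * n i0 + n i0 := by ring
            _ = x + z + n i0 := by rw [he]
            _ = x + n i0 + z := by ring
        have := avoid_bullet n i0 i1 hlt01 hmonoM h2nd hFub hbig'' h0 hb hm1D
        omega
      · have hdrop : VBul n x (fun j => if j = i0 then c i0 - 1 else c j) :=
          bullet_pred n i0 hb h0
        have h1 := bound_to_bullet n hω₀mem hdrop
        have h2 : ∑ j, c j = (∑ j, (if j = i0 then c i0 - 1 else c j)) + 1 := sz_drop i0 h0
        omega
    exact Nat.sInf_le hmem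
  omega
end

section
/- Let S = ⟨n₁, …, n_k⟩ be a numerical monoid with minimal generating set {n₁, …, n_k} and let x ∈ S be nonzero. Then ω(x) = m if and only if m is the maximum length of a sum x₁ + ⋯ + x_t of irreducible elements of S such that x divides x₁ + ⋯ + x_t in S but x does not divide x₁ + ⋯ + x_{j−1} + x_{j+1} + ⋯ + x_t in S for any 1 ≤ j ≤ t. -/
/-- `t` is the length of a bullet for `x`: a sum of `t` irreducibles that `x` divides,
but such that `x` divides no sum obtained by omitting one summand. -/
def IsBulletLength {k : ℕ} (n : Fin k → ℕ) (x t : ℕ) : Prop :=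
  ∃ f : Fin t → ℕ, (∀ i, IrreducibleIn (NumMon n) (f i)) ∧
    GDvd n x (∑ i, f i) ∧
    ∀ j : Fin t, ¬ GDvd n x (∑ i ∈ Finset.univ.erase j, f i)

/-! Every divisibility `x ∣ x₁ + ⋯ + x_t` in `S` refines, after factoring each `xᵢ` into
irreducibles, to an inclusion-minimal subfamily of irreducibles still divisible by `x`: a bullet,
which involves at most as many `xᵢ` as its length. Conversely no proper subsum of a bullet is
divisible by `x`. So the ω-bounds are exactly the upper bounds of the bullet lengths, and `ω(x)`
is the largest bullet length. Bullet lengths are at most `2x`: by Erdős–Ginzburg–Ziv, any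
`2x - 1` summands contain `x` of them whose sum is a positive multiple of `x`, which `x` divides
in `S` since `x ∈ S`. -/

open Finset

section

variable {k : ℕ} {n : Fin k → ℕ} {x : ℕ}

theorem numMon_eq_span (n : Fin k → ℕ) : NumMon n = Submodule.span ℕ (Set.range n) := by
  ext y
  simp [NumMon, Submodule.mem_span_range_iff_exists_fun]

namespace NumMon

theorem zero_mem (n : Fin k → ℕ) : 0 ∈ NumMon n := by
  rw [numMon_eq_span]; exact Submodule.zero_mem _

theorem add_mem {a b : ℕ} (ha : a ∈ NumMon n) (hb : b ∈ NumMon n) : a + b ∈ NumMon n := by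
  rw [numMon_eq_span] at ha hb ⊢; exact Submodule.add_mem _ ha hb

theorem sum_mem {ι : Type*} {s : Finset ι} {f : ι → ℕ} (hf : ∀ i ∈ s, f i ∈ NumMon n) :
    ∑ i ∈ s, f i ∈ NumMon n := by
  rw [numMon_eq_span] at hf ⊢; exact Submodule.sum_mem _ hf

theorem mul_mem {a : ℕ} (c : ℕ) (ha : a ∈ NumMon n) : c * a ∈ NumMon n := by
  rw [numMon_eq_span] at ha ⊢; exact Submodule.smul_mem _ c ha

end NumMon

theorem IrreducibleIn.exists_list_sum {S : Set ℕ} {y : ℕ} (hy : y ∈ S) :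
    ∃ L : List ℕ, (∀ a ∈ L, IrreducibleIn S a) ∧ L.sum = y := by
  induction y using Nat.strong_induction_on with
  | _ y ih =>
  by_cases hy0 : y = 0
  · exact ⟨[], by simp, hy0.symm⟩
  by_cases hirr : IrreducibleIn S y
  · exact ⟨[y], by simpa using hirr, by simp⟩
  obtain ⟨a, ha, b, hb, rfl, ha0, hb0⟩ : ∃ a ∈ S, ∃ b ∈ S, y = a + b ∧ a ≠ 0 ∧ b ≠ 0 := by
    simpa [IrreducibleIn, hy, hy0] using hirr
  obtain ⟨La, hLa, hsa⟩ := ih a (by omega) ha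
  obtain ⟨Lb, hLb, hsb⟩ := ih b (by omega) hb
  exact ⟨La ++ Lb, by simpa [or_imp, forall_and] using ⟨hLa, hLb⟩, by simp [hsa, hsb]⟩

namespace GDvd

theorem refl (n : Fin k → ℕ) (x : ℕ) : GDvd n x x := ⟨0, NumMon.zero_mem n, rfl⟩

theorem of_dvd (hx : x ∈ NumMon n) {y : ℕ} (hdvd : x ∣ y) (hle : x ≤ y) : GDvd n x y := by
  obtain ⟨q, rfl⟩ := hdvd
  refine ⟨(q - 1) * x, NumMon.mul_mem _ hx, ?_⟩
  rw [Nat.sub_one_mul, mul_comm q]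
  omega

theorem mono_sum {ι : Type*} [DecidableEq ι] {f : ι → ℕ} {T V : Finset ι} (hTV : T ⊆ V)
    (hf : ∀ i ∈ V, f i ∈ NumMon n) (h : GDvd n x (∑ i ∈ T, f i)) :
    GDvd n x (∑ i ∈ V, f i) := by
  obtain ⟨z, hz, hsum⟩ := h
  refine ⟨z + ∑ i ∈ V \ T, f i, ?_, ?_⟩
  · exact NumMon.add_mem hz (NumMon.sum_mem fun i hi => hf i (sdiff_subset hi))
  · rw [← sum_sdiff hTV, hsum]; ring

end GDvd

theorem isBulletLength_card {ι : Type*} [DecidableEq ι] {g : ι → ℕ} {U : Finset ι}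
    (hirr : ∀ i ∈ U, IrreducibleIn (NumMon n) (g i)) (hdvd : GDvd n x (∑ i ∈ U, g i))
    (hmin : ∀ a ∈ U, ¬ GDvd n x (∑ i ∈ U.erase a, g i)) : IsBulletLength n x #U := by
  set e := U.equivFin
  have hsum : ∑ j, g (e.symm j) = ∑ i ∈ U, g i :=
    (Equiv.sum_comp e.symm (fun i : U => g i)).trans (sum_coe_sort U g)
  refine ⟨fun j => g (e.symm j), fun j => hirr _ (e.symm j).2, hsum ▸ hdvd, fun j hj => ?_⟩
  apply hmin _ (e.symm j).2
  have h₁ : g (e.symm j) + ∑ i ∈ univ.erase j, g (e.symm i) = ∑ i ∈ U, g i :=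
    (add_sum_erase univ (fun i => g (e.symm i)) (mem_univ j)).trans hsum
  have h₂ := add_sum_erase U g (e.symm j).2
  convert hj using 1
  beta_reduce
  omega

theorem exists_isBulletLength_subset {ι : Type*} [DecidableEq ι] {g : ι → ℕ} {V : Finset ι}
    (hirr : ∀ i ∈ V, IrreducibleIn (NumMon n) (g i)) (hdvd : GDvd n x (∑ i ∈ V, g i)) :
    ∃ U ⊆ V, GDvd n x (∑ i ∈ U, g i) ∧ IsBulletLength n x #U := by
  obtain ⟨U, hUV, hU⟩ :=
    exists_minimal_le_of_wellFoundedLT (fun W => GDvd n x (∑ i ∈ W, g i)) V hdvd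
  refine ⟨U, hUV, hU.prop, isBulletLength_card (fun i hi => hirr i (hUV hi)) hU.prop ?_⟩
  intro a ha hdvd'
  exact notMem_erase a U (hU.le_of_le hdvd' (erase_subset a U) ha)

theorem IsBulletLength.le_of_omegaBound {t m : ℕ} (ht : IsBulletLength n x t)
    (hm : GOmegaBound n x m) : t ≤ m := by
  obtain ⟨f, hirr, hdvd, hmin⟩ := ht
  obtain ⟨T, hTm, hT⟩ := hm t f (fun i => (hirr i).1) hdvd
  rcases em (∃ j, j ∉ T) with ⟨j, hj⟩ | hTuniv
  · exact absurd (GDvd.mono_sum (subset_erase.2 ⟨subset_univ T, hj⟩) (fun i _ => (hirr i).1) hT)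
      (hmin j)
  · simpa [eq_univ_of_forall (not_exists_not.1 hTuniv)] using hTm

theorem gOmegaBound_of_forall_isBulletLength_le {B : ℕ}
    (hB : ∀ t, IsBulletLength n x t → t ≤ B) : GOmegaBound n x B := by
  classical
  intro t f hf hdvd
  choose L hLirr hLsum using fun i => IrreducibleIn.exists_list_sum (hf i)
  let g : (Σ i : Fin t, Fin (L i).length) → ℕ := fun p => (L p.1)[p.2.1]
  have hgirr : ∀ p, IrreducibleIn (NumMon n) (g p) := fun p => hLirr p.1 _ (List.getElem_mem _)
  have hsum : ∀ T : Finset (Fin t), ∑ i ∈ T, f i = ∑ p ∈ T.sigma fun _ => univ, g p := by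
    intro T
    rw [sum_sigma]
    exact sum_congr rfl fun i _ => by rw [← hLsum i, Fin.sum_univ_getElem]
  obtain ⟨U, -, hU, hUbullet⟩ :=
    exists_isBulletLength_subset (fun p _ => hgirr p) (hsum univ ▸ hdvd)
  refine ⟨U.image Sigma.fst, card_image_le.trans (hB _ hUbullet), ?_⟩
  rw [hsum]
  refine GDvd.mono_sum (fun p hp => ?_) (fun p _ => (hgirr p).1) hU
  simpa using mem_image_of_mem Sigma.fst hp

theorem IsBulletLength.le_two_mul (hx : x ∈ NumMon n) {t : ℕ} (ht : IsBulletLength n x t) :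
    t ≤ 2 * x := by
  obtain ⟨f, hirr, -, hmin⟩ := ht
  by_contra! hlt
  let j : Fin t := ⟨0, by omega⟩
  obtain ⟨T, hT, hTcard, hTsum⟩ := ZMod.erdos_ginzburg_ziv (s := univ.erase j)
    (fun i => (f i : ZMod x)) (by simp; omega)
  refine hmin j (GDvd.mono_sum hT (fun i _ => (hirr i).1) (GDvd.of_dvd hx ?_ ?_))
  · rw [← ZMod.natCast_eq_zero_iff]
    push_cast
    exact hTsum
  · calc x = #T • 1 := by simp [hTcard]
      _ ≤ ∑ i ∈ T, f i := card_nsmul_le_sum T f 1 fun i _ => Nat.one_le_iff_ne_zero.2 (hirr i).2.1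

theorem exists_isBulletLength (hx : x ∈ NumMon n) : ∃ t, IsBulletLength n x t := by
  obtain ⟨L, hirr, hsum⟩ := IrreducibleIn.exists_list_sum hx
  obtain ⟨U, -, -, hU⟩ := exists_isBulletLength_subset (g := fun i : Fin L.length => L[i.1])
    (V := univ) (fun i _ => hirr _ (List.getElem_mem _))
    (by rw [Fin.sum_univ_getElem, hsum]; exact GDvd.refl n x)
  exact ⟨_, hU⟩

theorem isLeast_gOmegaBound {B : ℕ} (hB : IsGreatest {t | IsBulletLength n x t} B) :
    IsLeast {m | GOmegaBound n x m} B :=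
  ⟨gOmegaBound_of_forall_isBulletLength_le hB.2, fun _ hm => hB.1.le_of_omegaBound hm⟩

end

theorem numerical_monoid_omega_via_bullets_general {k : ℕ}
    (n : Fin k → ℕ) (x : ℕ) (hx : x ∈ NumMon n) (m : ℕ) :
    GOmega n x = m ↔ IsGreatest {t : ℕ | IsBulletLength n x t} m := by
  obtain ⟨B, hB⟩ := BddAbove.exists_isGreatest_of_nonempty
    ⟨2 * x, fun _ ht => IsBulletLength.le_two_mul hx ht⟩ (exists_isBulletLength hx)
  rw [GOmega, (isLeast_gOmegaBound hB).csInf_eq]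
  exact ⟨fun h => h ▸ hB, hB.unique⟩

theorem numerical_monoid_omega_via_bullets {k : ℕ}
    (n : Fin k → ℕ) (hpos : ∀ i, 0 < n i) (hmin : MinimalGens n)
    (x : ℕ) (hx : x ∈ NumMon n) (hx0 : x ≠ 0) (m : ℕ) :
    GOmega n x = m ↔ IsGreatest {t : ℕ | IsBulletLength n x t} m :=
  numerical_monoid_omega_via_bullets_general n x hx m
end

section
/- In the Chicken McNugget monoid M, ω(6) = 3, ω(9) = 3, and ω(20) = 10. -/
/-- `x` divides `y` in the McNugget monoid. -/
def McNDvd (x y : ℕ) : Prop := ∃ z ∈ McN, y = x + z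

/-- `m` is an ω-bound for `x`: whenever `x` divides a sum of elements of `McN`,
it divides a subsum of at most `m` of them. -/
def OmegaBound (x m : ℕ) : Prop :=
  ∀ (t : ℕ) (f : Fin t → ℕ), (∀ i, f i ∈ McN) → McNDvd x (∑ i, f i) →
    ∃ T : Finset (Fin t), T.card ≤ m ∧ McNDvd x (∑ i ∈ T, f i)

/-- The ω-primality of `x` in the McNugget monoid. -/
noncomputable def omegaMcN (x : ℕ) : ℕ := sInf {m | OmegaBound x m}

lemma mcdvd_iff (x y : ℕ) : McNDvd x y ↔ ∃ a b c : ℕ, y = x + (6*a+9*b+20*c) := by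
  constructor
  · rintro ⟨z, ⟨a,b,c,hz⟩, hy⟩
    exact ⟨a,b,c, by omega⟩
  · rintro ⟨a,b,c,h⟩
    exact ⟨_, ⟨a,b,c,rfl⟩, h⟩

lemma sel {t : ℕ} (A : Fin t → ℕ) :
    ∀ n : ℕ, n ≤ ∑ i, A i → ∃ T : Finset (Fin t), T.card ≤ n ∧ n ≤ ∑ i ∈ T, A i := by
  intro n
  induction n with
  | zero => exact fun _ => ⟨∅, by simp, by simp⟩
  | succ n ih =>
    intro hn
    obtain ⟨T, hT, hs⟩ := ih (by omega)
    by_cases h : n + 1 ≤ ∑ i ∈ T, A i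
    · exact ⟨T, by omega, h⟩
    · have hex : ∃ i, i ∉ T ∧ A i ≠ 0 := by
        by_contra hc
        push_neg at hc
        have heq : ∑ i ∈ T, A i = ∑ i, A i :=
          Finset.sum_subset (Finset.subset_univ T) (fun i _ hi => hc i hi)
        omega
      obtain ⟨i, hiT, hAi⟩ := hex
      refine ⟨insert i T, ?_, ?_⟩
      · rw [Finset.card_insert_of_notMem hiT]; omega
      · rw [Finset.sum_insert hiT]; omega

lemma bound_of_gen (x m : ℕ)
    (h : ∀ a b c : ℕ, McNDvd x (6*a+9*b+20*c) →
      ∃ a' b' c' : ℕ, a' ≤ a ∧ b' ≤ b ∧ c' ≤ c ∧ a'+b'+c' ≤ m ∧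
        McNDvd x (6*a'+9*b'+20*c')) : OmegaBound x m := by
  intro t f hf hd
  choose A B C hABC using hf
  have hsum : ∀ S : Finset (Fin t), ∑ i ∈ S, f i
      = 6 * ∑ i ∈ S, A i + 9 * ∑ i ∈ S, B i + 20 * ∑ i ∈ S, C i := by
    intro S
    rw [Finset.mul_sum, Finset.mul_sum, Finset.mul_sum, ← Finset.sum_add_distrib,
        ← Finset.sum_add_distrib]
    exact Finset.sum_congr rfl fun i _ => (hABC i).symm
  rw [hsum Finset.univ] at hd
  obtain ⟨a', b', c', ha, hb, hc, hm, hd'⟩ := h _ _ _ hd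
  obtain ⟨T1, hT1c, hT1⟩ := sel A a' ha
  obtain ⟨T2, hT2c, hT2⟩ := sel B b' hb
  obtain ⟨T3, hT3c, hT3⟩ := sel C c' hc
  refine ⟨T1 ∪ T2 ∪ T3, ?_, ?_⟩
  · calc (T1 ∪ T2 ∪ T3).card ≤ (T1 ∪ T2).card + T3.card := Finset.card_union_le _ _
    _ ≤ T1.card + T2.card + T3.card := by
        have := Finset.card_union_le T1 T2; omega
    _ ≤ m := by omega
  · have h1 : a' ≤ ∑ i ∈ T1 ∪ T2 ∪ T3, A i :=
      hT1.trans (Finset.sum_le_sum_of_subset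
        (Finset.subset_union_left.trans Finset.subset_union_left))
    have h2 : b' ≤ ∑ i ∈ T1 ∪ T2 ∪ T3, B i :=
      hT2.trans (Finset.sum_le_sum_of_subset
        (Finset.subset_union_right.trans Finset.subset_union_left))
    have h3 : c' ≤ ∑ i ∈ T1 ∪ T2 ∪ T3, C i :=
      hT3.trans (Finset.sum_le_sum_of_subset Finset.subset_union_right)
    rw [hsum, mcdvd_iff]
    rw [mcdvd_iff] at hd'
    obtain ⟨α, β, γ, heq⟩ := hd'
    exact ⟨α + ((∑ i ∈ T1 ∪ T2 ∪ T3, A i) - a'),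
           β + ((∑ i ∈ T1 ∪ T2 ∪ T3, B i) - b'),
           γ + ((∑ i ∈ T1 ∪ T2 ∪ T3, C i) - c'), by omega⟩

lemma omegaBound_mono {x m m' : ℕ} (h : OmegaBound x m) (hm : m ≤ m') : OmegaBound x m' :=
  fun t f hf hd => let ⟨T, h1, h2⟩ := h t f hf hd; ⟨T, h1.trans hm, h2⟩

lemma omega_eq (x k : ℕ) (hk0 : 1 ≤ k) (hk : OmegaBound x k) (hk' : ¬ OmegaBound x (k-1)) :
    omegaMcN x = k := by
  refine le_antisymm (Nat.sInf_le hk) (le_csInf ⟨k, hk⟩ fun m hm => ?_)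
  by_contra hlt
  push_neg at hlt
  exact hk' (omegaBound_mono hm (by omega))

lemma bound6 : OmegaBound 6 3 := by
  apply bound_of_gen
  intro a b c hd
  rcases Nat.lt_or_ge a 1 with ha | ha
  · rcases Nat.lt_or_ge b 2 with hb | hb
    · rcases Nat.lt_or_ge c 3 with hc | hc
      · exfalso
        rw [mcdvd_iff] at hd
        obtain ⟨A, B, C, h⟩ := hd
        omega
      · exact ⟨0, 0, 3, by omega, by omega, hc, by omega,
          (mcdvd_iff _ _).2 ⟨0, 6, 0, by norm_num⟩⟩
    · exact ⟨0, 2, 0, by omega, hb, by omega, by omega,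
        (mcdvd_iff _ _).2 ⟨2, 0, 0, by norm_num⟩⟩
  · exact ⟨1, 0, 0, ha, by omega, by omega, by omega,
      (mcdvd_iff _ _).2 ⟨0, 0, 0, by norm_num⟩⟩

lemma bound9 : OmegaBound 9 3 := by
  apply bound_of_gen
  intro a b c hd
  rcases Nat.lt_or_ge b 1 with hb | hb
  · rcases Nat.lt_or_ge a 3 with ha | ha
    · rcases Nat.lt_or_ge c 3 with hc | hc
      · exfalso
        rw [mcdvd_iff] at hd
        obtain ⟨A, B, C, h⟩ := hd
        omega
      · exact ⟨0, 0, 3, by omega, by omega, hc, by omega,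
          (mcdvd_iff _ _).2 ⟨7, 1, 0, by norm_num⟩⟩
    · exact ⟨3, 0, 0, ha, by omega, by omega, by omega,
        (mcdvd_iff _ _).2 ⟨0, 1, 0, by norm_num⟩⟩
  · exact ⟨0, 1, 0, by omega, hb, by omega, by omega,
      (mcdvd_iff _ _).2 ⟨0, 0, 0, by norm_num⟩⟩

lemma bound20 : OmegaBound 20 10 := by
  apply bound_of_gen
  intro a b c hd
  rcases Nat.lt_or_ge c 1 with hc | hc
  · rcases Nat.lt_or_ge b 8 with hb8 | hb8
    · rcases Nat.lt_or_ge b 6 with hb6 | hb6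
      · rcases Nat.lt_or_ge b 4 with hb4 | hb4
        · rcases Nat.lt_or_ge b 2 with hb2 | hb2
          · rcases Nat.lt_or_ge a 10 with ha | ha
            · exfalso
              rw [mcdvd_iff] at hd
              obtain ⟨A, B, C, h⟩ := hd
              omega
            · exact ⟨10, 0, 0, ha, by omega, by omega, by omega,
                (mcdvd_iff _ _).2 ⟨0, 0, 2, by norm_num⟩⟩
          · rcases Nat.lt_or_ge a 7 with ha | ha
            · exfalso
              rw [mcdvd_iff] at hd
              obtain ⟨A, B, C, h⟩ := hd
              omega
            · rcases Nat.lt_or_ge b 3 with hb3 | hb3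
              · exact ⟨7, 2, 0, ha, by omega, by omega, by omega,
                  (mcdvd_iff _ _).2 ⟨0, 0, 2, by norm_num⟩⟩
              · exact ⟨7, 3, 0, ha, hb3, by omega, by omega,
                  (mcdvd_iff _ _).2 ⟨0, 1, 2, by norm_num⟩⟩
        · rcases Nat.lt_or_ge a 4 with ha | ha
          · exfalso
            rw [mcdvd_iff] at hd
            obtain ⟨A, B, C, h⟩ := hd
            omega
          · exact ⟨4, 4, 0, ha, hb4, by omega, by omega,
              (mcdvd_iff _ _).2 ⟨0, 0, 2, by norm_num⟩⟩
      · rcases Nat.lt_or_ge a 1 with ha | ha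
        · exfalso
          rw [mcdvd_iff] at hd
          obtain ⟨A, B, C, h⟩ := hd
          omega
        · exact ⟨1, 6, 0, ha, hb6, by omega, by omega,
            (mcdvd_iff _ _).2 ⟨0, 0, 2, by norm_num⟩⟩
    · exact ⟨0, 8, 0, by omega, hb8, by omega, by omega,
        (mcdvd_iff _ _).2 ⟨2, 0, 2, by norm_num⟩⟩
  · exact ⟨0, 0, 1, by omega, by omega, hc, by omega,
      (mcdvd_iff _ _).2 ⟨0, 0, 0, by norm_num⟩⟩

lemma notbound6 : ¬ OmegaBound 6 2 := by
  intro h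
  obtain ⟨T, hc, hd⟩ := h 3 (fun _ => 20) (fun _ => ⟨0, 0, 1, by norm_num⟩)
    (by
      have : (∑ _i : Fin 3, 20) = 60 := by simp
      rw [this, mcdvd_iff]
      exact ⟨0, 6, 0, by norm_num⟩)
  rw [Finset.sum_const, smul_eq_mul, mcdvd_iff] at hd
  obtain ⟨A, B, C, h⟩ := hd
  omega

lemma notbound9 : ¬ OmegaBound 9 2 := by
  intro h
  obtain ⟨T, hc, hd⟩ := h 3 (fun _ => 6) (fun _ => ⟨1, 0, 0, by norm_num⟩)
    (by
      have : (∑ _i : Fin 3, 6) = 18 := by simp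
      rw [this, mcdvd_iff]
      exact ⟨0, 1, 0, by norm_num⟩)
  rw [Finset.sum_const, smul_eq_mul, mcdvd_iff] at hd
  obtain ⟨A, B, C, h⟩ := hd
  omega

lemma notbound20 : ¬ OmegaBound 20 9 := by
  intro h
  obtain ⟨T, hc, hd⟩ := h 10 (fun _ => 6) (fun _ => ⟨1, 0, 0, by norm_num⟩)
    (by
      have : (∑ _i : Fin 10, 6) = 60 := by simp
      rw [this, mcdvd_iff]
      exact ⟨0, 0, 2, by norm_num⟩)
  rw [Finset.sum_const, smul_eq_mul, mcdvd_iff] at hd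
  obtain ⟨A, B, C, h⟩ := hd
  have hcard : T.card ≤ 9 := hc
  omega

theorem mcnugget_omega_of_generators :
    omegaMcN 6 = 3 ∧ omegaMcN 9 = 3 ∧ omegaMcN 20 = 10 := by
  refine ⟨omega_eq 6 3 (by norm_num) bound6 notbound6,
          omega_eq 9 3 (by norm_num) bound9 notbound9,
          omega_eq 20 10 (by norm_num) bound20 notbound20⟩
end

section
/- For every x in the Chicken McNugget monoid M, L(x + 6) = L(x) + 1. In particular, writing x = 6q + r with q, r ∈ ℕ and r < 6, one has L(x) = q if r = 0 or r = 3; L(x) = q − 5 if r = 1; L(x) = q − 2 if r = 2 or r = 5; and L(x) = q − 4 if r = 4. -/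
lemma lmax_eq {x l : ℕ} (hmem : l ∈ LenSet x)
    (hub : ∀ m ∈ LenSet x, m ≤ l) : Lmax x = l :=
  le_antisymm (csSup_le ⟨l, hmem⟩ hub) (le_csSup (lenset_bdd x) hmem)

lemma key (q r : ℕ) (hr : r < 6) (hx : (6*q+r) ∈ McN) :
    Lmax (6*q+r) = (if r = 0 ∨ r = 3 then q
        else if r = 1 then q - 5
        else if r = 2 ∨ r = 5 then q - 2
        else q - 4) ∧
    (r = 1 → 8 ≤ q) ∧ (r = 2 → 3 ≤ q) ∧ (r = 3 → 1 ≤ q) ∧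
    (r = 4 → 6 ≤ q) ∧ (r = 5 → 4 ≤ q) := by
  obtain ⟨a, b, c, habc⟩ := hx
  have hb : (r = 1 → 8 ≤ q) ∧ (r = 2 → 3 ≤ q) ∧ (r = 3 → 1 ≤ q) ∧
      (r = 4 → 6 ≤ q) ∧ (r = 5 → 4 ≤ q) := by omega
  refine ⟨?_, hb⟩
  interval_cases r <;> norm_num
  · exact lmax_eq ⟨q, 0, 0, by omega⟩
      (fun m hm => by obtain ⟨a', b', c', h1, h2⟩ := hm; omega)
  · exact lmax_eq ⟨q - 8, 1, 2, by omega⟩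
      (fun m hm => by obtain ⟨a', b', c', h1, h2⟩ := hm; omega)
  · exact lmax_eq ⟨q - 3, 0, 1, by omega⟩
      (fun m hm => by obtain ⟨a', b', c', h1, h2⟩ := hm; omega)
  · exact lmax_eq ⟨q - 1, 1, 0, by omega⟩
      (fun m hm => by obtain ⟨a', b', c', h1, h2⟩ := hm; omega)
  · exact lmax_eq ⟨q - 6, 0, 2, by omega⟩
      (fun m hm => by obtain ⟨a', b', c', h1, h2⟩ := hm; omega)
  · exact lmax_eq ⟨q - 4, 1, 1, by omega⟩
      (fun m hm => by obtain ⟨a', b', c', h1, h2⟩ := hm; omega)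

theorem mcnugget_max_length :
    (∀ x ∈ McN, Lmax (x + 6) = Lmax x + 1) ∧
    (∀ x ∈ McN, ∀ q r : ℕ, x = 6 * q + r → r < 6 →
      Lmax x = if r = 0 ∨ r = 3 then q
        else if r = 1 then q - 5
        else if r = 2 ∨ r = 5 then q - 2
        else q - 4) := by
  constructor
  · intro x hx
    obtain ⟨q, r, hr, rfl⟩ : ∃ q r, r < 6 ∧ x = 6 * q + r :=
      ⟨x / 6, x % 6, by omega, by omega⟩
    have h1 := key q r hr hx
    have hx6 : (6 * (q + 1) + r) ∈ McN := by
      obtain ⟨a, b, c, h⟩ := hx; exact ⟨a + 1, b, c, by omega⟩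
    have h2 := key (q + 1) r hr hx6
    have e : 6 * q + r + 6 = 6 * (q + 1) + r := by ring
    rw [e, h2.1, h1.1]
    obtain ⟨-, b1, b2, b3, b4, b5⟩ := h1
    split_ifs <;> omega
  · intro x hx q r hxe hr
    subst hxe
    exact (key q r hr hx).1
end

section
/- The delta set of the Chicken McNugget monoid is Δ(M) = ⋃_{x ∈ M} Δ(x) = {1, 2, 3, 4}. -/
/-- The delta set of `x`: gaps between consecutive factorization lengths. -/
def DeltaSet (x : ℕ) : Set ℕ :=
  {d | ∃ m ∈ LenSet x, ∃ n ∈ LenSet x, m < n ∧ d = n - m ∧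
    ∀ l ∈ LenSet x, ¬ (m < l ∧ l < n)}

theorem mcnugget_delta_set_of_monoid :
    (⋃ x ∈ McN, DeltaSet x) = {1, 2, 3, 4} := by
  ext d
  simp only [Set.mem_iUnion, Set.mem_insert_iff, Set.mem_singleton_iff]
  constructor
  · rintro ⟨x, hx, m, ⟨a', b', c', he', hl'⟩, n, ⟨a, b, c, he, hl⟩, hmn, hd, hbet⟩
    have h4 : n ≤ m + 4 := by
      by_contra h5
      by_cases hb : 2 ≤ b'
      · exact hbet (m + 1) ⟨a' + 3, b' - 2, c', by omega, by omega⟩ ⟨by omega, by omega⟩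
      by_cases hc : 3 ≤ c'
      · exact hbet (m + 4) ⟨a' + 1, b' + 6, c' - 3, by omega, by omega⟩ ⟨by omega, by omega⟩
      omega
    omega
  · rintro (rfl | rfl | rfl | rfl)
    · exact ⟨18, ⟨3, 0, 0, by norm_num⟩, 2, ⟨0, 2, 0, by norm_num, by norm_num⟩,
        3, ⟨3, 0, 0, by norm_num, by norm_num⟩, by omega, by omega,
        fun l ⟨a, b, c, h1, h2⟩ => by omega⟩
    · exact ⟨90, ⟨5, 0, 3, by norm_num⟩, 8, ⟨5, 0, 3, by norm_num, by norm_num⟩,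
        10, ⟨0, 10, 0, by norm_num, by norm_num⟩, by omega, by omega,
        fun l ⟨a, b, c, h1, h2⟩ => by omega⟩
    · exact ⟨72, ⟨2, 0, 3, by norm_num⟩, 5, ⟨2, 0, 3, by norm_num, by norm_num⟩,
        8, ⟨0, 8, 0, by norm_num, by norm_num⟩, by omega, by omega,
        fun l ⟨a, b, c, h1, h2⟩ => by omega⟩
    · exact ⟨60, ⟨0, 0, 3, by norm_num⟩, 3, ⟨0, 0, 3, by norm_num, by norm_num⟩,
        7, ⟨1, 6, 0, by norm_num, by norm_num⟩, by omega, by omega,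
        fun l ⟨a, b, c, h1, h2⟩ => by omega⟩
end

section
/- For every nonzero x in the Chicken McNugget monoid M with x ∉ {6, 12}, one has ω(x + 6) = ω(x) + 1. In particular, writing x = 6q + r with q, r ∈ ℕ and r < 6, for every nonzero x ∈ M with x ∉ {6, 12} one has ω(x) = q if r = 0; ω(x) = q + 5 if r = 1; ω(x) = q + 7 if r = 2; ω(x) = q + 2 if r = 3; ω(x) = q + 4 if r = 4; and ω(x) = q + 9 if r = 5. -/
/-- The Apéry set of 6 in M, indexed by residue class. -/
def ap : ℕ → ℕ
  | 0 => 0 | 1 => 49 | 2 => 20 | 3 => 9 | 4 => 40 | _ => 29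

lemma ap_le (r : ℕ) : ap r ≤ 49 := by
  rcases r with _ | _ | _ | _ | _ | r <;> simp [ap]

lemma mem_iff (n : ℕ) : n ∈ McN ↔ ap (n % 6) ≤ n := by
  constructor
  · rintro ⟨a, b, c, rfl⟩
    have h2 : b % 2 = 0 ∨ b % 2 = 1 := by omega
    have h3 : c % 3 = 0 ∨ c % 3 = 1 ∨ c % 3 = 2 := by omega
    rcases h2 with h2 | h2 <;> rcases h3 with h3 | h3 | h3
    · have hm : (6 * a + 9 * b + 20 * c) % 6 = 0 := by omega
      rw [hm]; simp [ap]
    · have hm : (6 * a + 9 * b + 20 * c) % 6 = 2 := by omega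
      rw [hm]; simp [ap]; omega
    · have hm : (6 * a + 9 * b + 20 * c) % 6 = 4 := by omega
      rw [hm]; simp [ap]; omega
    · have hm : (6 * a + 9 * b + 20 * c) % 6 = 3 := by omega
      rw [hm]; simp [ap]; omega
    · have hm : (6 * a + 9 * b + 20 * c) % 6 = 5 := by omega
      rw [hm]; simp [ap]; omega
    · have hm : (6 * a + 9 * b + 20 * c) % 6 = 1 := by omega
      rw [hm]; simp [ap]; omega
  · intro h
    rcases (by omega : n % 6 = 0 ∨ n % 6 = 1 ∨ n % 6 = 2 ∨ n % 6 = 3 ∨ n % 6 = 4 ∨ n % 6 = 5) with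
      h6 | h6 | h6 | h6 | h6 | h6 <;> rw [h6] at h <;> simp [ap] at h ⊢
    · exact ⟨n / 6, 0, 0, by omega⟩
    · exact ⟨(n - 49) / 6, 1, 2, by omega⟩
    · exact ⟨(n - 20) / 6, 0, 1, by omega⟩
    · exact ⟨(n - 9) / 6, 1, 0, by omega⟩
    · exact ⟨(n - 40) / 6, 0, 2, by omega⟩
    · exact ⟨(n - 29) / 6, 1, 1, by omega⟩

lemma mcn_add {m n : ℕ} (hm : m ∈ McN) (hn : n ∈ McN) : m + n ∈ McN := by
  obtain ⟨a1, b1, c1, h1⟩ := hm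
  obtain ⟨a2, b2, c2, h2⟩ := hn
  exact ⟨a1 + a2, b1 + b2, c1 + c2, by omega⟩

/-- The Apéry element in the class of `-x` mod 6. -/
def msx (x : ℕ) : ℕ := ap ((6 - x % 6) % 6)

lemma msx_cases (x : ℕ) :
    (x % 6 = 0 ∧ msx x = 0) ∨ (x % 6 = 1 ∧ msx x = 29) ∨ (x % 6 = 2 ∧ msx x = 40) ∨
    (x % 6 = 3 ∧ msx x = 9) ∨ (x % 6 = 4 ∧ msx x = 20) ∨ (x % 6 = 5 ∧ msx x = 49) := by
  rcases (by omega : x % 6 = 0 ∨ x % 6 = 1 ∨ x % 6 = 2 ∨ x % 6 = 3 ∨ x % 6 = 4 ∨ x % 6 = 5) with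
    h | h | h | h | h | h <;> simp [msx, h, ap]

lemma mem_msx (x : ℕ) : msx x ∈ McN := by
  rcases msx_cases x with ⟨_, h⟩ | ⟨_, h⟩ | ⟨_, h⟩ | ⟨_, h⟩ | ⟨_, h⟩ | ⟨_, h⟩ <;>
    rw [mem_iff, h] <;> decide

/-- The value that `omegaMcN x` will turn out to equal. -/
def Fx (x : ℕ) : ℕ := (x + msx x) / 6

lemma six_F (x : ℕ) : 6 * Fx x = x + msx x := by
  rcases msx_cases x with ⟨h1, h2⟩ | ⟨h1, h2⟩ | ⟨h1, h2⟩ | ⟨h1, h2⟩ | ⟨h1, h2⟩ | ⟨h1, h2⟩ <;>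
    rw [Fx, h2] <;> omega

/-- Finite check, branch `a = 0`. -/
def PA1 (b c d : ℕ) : Prop :=
    ap ((9 * b + 20 * c - d) % 6) ≤ 9 * b + 20 * c - d →
    9 * b + 20 * c - d ≠ 0 → 9 * b + 20 * c - d ≠ 6 → 9 * b + 20 * c - d ≠ 12 →
    d ≤ 3 * b + 14 * c + msx (9 * b + 20 * c - d)

noncomputable instance PA1.dec (b c d : ℕ) : Decidable (PA1 b c d) := by
  unfold PA1; infer_instance

def PA (b c d : ℕ) : Prop :=
    ap (d % 6) ≤ d →
    (0 < b → ¬(9 ≤ d ∧ ap ((d - 9) % 6) ≤ d - 9)) →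
    (0 < c → ¬(20 ≤ d ∧ ap ((d - 20) % 6) ≤ d - 20)) →
    d ≤ 9 * b + 20 * c →
    PA1 b c d

noncomputable instance PA.dec (b c d : ℕ) : Decidable (PA b c d) := by
  unfold PA; infer_instance

/-- Finite check, branch `a > 0`. -/
def PB (b c d : ℕ) : Prop :=
    ap (d % 6) ≤ d → ¬(6 ≤ d ∧ ap ((d - 6) % 6) ≤ d - 6) →
    (0 < b → ¬(9 ≤ d ∧ ap ((d - 9) % 6) ≤ d - 9)) →
    (0 < c → ¬(20 ≤ d ∧ ap ((d - 20) % 6) ≤ d - 20)) →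
    d ≤ 3 * b + 14 * c + msx (9 * b + 20 * c + 120 - d)

noncomputable instance PB.dec (b c d : ℕ) : Decidable (PB b c d) := by
  unfold PB; infer_instance

set_option maxHeartbeats 2000000 in
lemma checkA : ∀ b < 23, ∀ c < 5, ∀ d < 69, PA b c d := by decide

set_option maxHeartbeats 2000000 in
lemma checkB : ∀ b < 23, ∀ c < 5, ∀ d < 69, PB b c d := by decide

/-- The key combinatorial claim: any "bullet-like" triple has bounded weight. -/
lemma claim (x a b c d : ℕ) (hx : ap (x % 6) ≤ x) (hx0 : x ≠ 0) (hx6 : x ≠ 6) (hx12 : x ≠ 12)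
    (hd : ap (d % 6) ≤ d) (heq : 6 * a + 9 * b + 20 * c = x + d)
    (ha : 0 < a → ¬(6 ≤ d ∧ ap ((d - 6) % 6) ≤ d - 6))
    (hb : 0 < b → ¬(9 ≤ d ∧ ap ((d - 9) % 6) ≤ d - 9))
    (hc : 0 < c → ¬(20 ≤ d ∧ ap ((d - 20) % 6) ≤ d - 20)) :
    d ≤ 3 * b + 14 * c + msx x := by
  have hd68 : d ≤ 68 := by
    rcases Nat.eq_zero_or_pos a with haz | hap
    · rcases Nat.eq_zero_or_pos b with hbz | hbp
      · rcases Nat.eq_zero_or_pos c with hcz | hcp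
        · omega
        · have h1 := hc hcp; have h2 := ap_le ((d - 20) % 6); omega
      · have h1 := hb hbp; have h2 := ap_le ((d - 9) % 6); omega
    · have h1 := ha hap; have h2 := ap_le ((d - 6) % 6); omega
  by_cases hbig : 69 ≤ 3 * b + 14 * c
  · omega
  · have hb23 : b < 23 := by omega
    have hc5 : c < 5 := by omega
    have hd69 : d < 69 := by omega
    rcases Nat.eq_zero_or_pos a with haz | hap
    · have hthis := checkA b hb23 c hc5 d hd69
      unfold PA at hthis
      have hxval : 9 * b + 20 * c - d = x := by omega
      have hthis2 := hthis hd hb hc (by omega)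
      unfold PA1 at hthis2
      rw [hxval] at hthis2
      exact hthis2 hx hx0 hx6 hx12
    · have hthis := checkB b hb23 c hc5 d hd69
      unfold PB at hthis
      have hmod : (9 * b + 20 * c + 120 - d) % 6 = x % 6 := by omega
      have hmsx : msx (9 * b + 20 * c + 120 - d) = msx x := by
        unfold msx; rw [hmod]
      rw [hmsx] at hthis
      exact hthis hd (ha hap) hb hc

/-- Selecting a pointwise-smaller function with prescribed smaller sum. -/
lemma exists_sub (t : ℕ) (f : Fin t → ℕ) :
    ∀ A, A ≤ ∑ i, f i → ∃ g : Fin t → ℕ, (∀ i, g i ≤ f i) ∧ ∑ i, g i = A := by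
  intro A
  induction A with
  | zero => exact fun _ => ⟨fun _ => 0, fun i => Nat.zero_le _, by simp⟩
  | succ n ih =>
    intro h
    obtain ⟨g, hg, hgs⟩ := ih (by omega)
    have hex : ∃ i, g i < f i := by
      by_contra hco
      push_neg at hco
      have : ∑ i, f i ≤ ∑ i, g i := Finset.sum_le_sum fun i _ => hco i
      omega
    obtain ⟨j, hj⟩ := hex
    refine ⟨Function.update g j (g j + 1), ?_, ?_⟩
    · intro i
      by_cases hij : i = j
      · subst hij; rw [Function.update_self]; omega
      · rw [Function.update_of_ne hij]; exact hg i
    · rw [Finset.sum_update_of_mem (Finset.mem_univ j)]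
      have h2 := Finset.add_sum_erase Finset.univ g (Finset.mem_univ j)
      rw [Finset.erase_eq] at h2
      omega

lemma ub (x : ℕ) (hx : x ∈ McN) (hx0 : x ≠ 0) (hx6 : x ≠ 6) (hx12 : x ≠ 12) :
    OmegaBound x (Fx x) := by
  intro t f hf hdvd
  have hf' : ∀ i, ∃ a b c : ℕ, 6 * a + 9 * b + 20 * c = f i := hf
  choose af bf cf hfe using hf'
  have hsum : ∑ i, f i = 6 * (∑ i, af i) + 9 * (∑ i, bf i) + 20 * (∑ i, cf i) := by
    calc ∑ i, f i = ∑ i, (6 * af i + 9 * bf i + 20 * cf i) :=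
          Finset.sum_congr rfl (fun i _ => (hfe i).symm)
      _ = 6 * (∑ i, af i) + 9 * (∑ i, bf i) + 20 * (∑ i, cf i) := by
          rw [Finset.sum_add_distrib, Finset.sum_add_distrib, ← Finset.mul_sum,
            ← Finset.mul_sum, ← Finset.mul_sum]
  rw [hsum] at hdvd
  set S : Set ℕ := {n | ∃ A B C, A ≤ (∑ i, af i) ∧ B ≤ (∑ i, bf i) ∧ C ≤ (∑ i, cf i) ∧
    A + B + C = n ∧ McNDvd x (6 * A + 9 * B + 20 * C)} with hSdef
  have hS : ((∑ i, af i) + (∑ i, bf i) + (∑ i, cf i)) ∈ S :=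
    ⟨_, _, _, le_refl _, le_refl _, le_refl _, rfl, hdvd⟩
  obtain ⟨A, B, C, hA, hB, hC, hsum', hdvd'⟩ := Nat.sInf_mem (Set.nonempty_of_mem hS)
  have hmin : ∀ A' B' C', A' ≤ (∑ i, af i) → B' ≤ (∑ i, bf i) → C' ≤ (∑ i, cf i) →
      McNDvd x (6 * A' + 9 * B' + 20 * C') → A + B + C ≤ A' + B' + C' := by
    intro A' B' C' h1 h2 h3 h4
    rw [hsum']
    exact Nat.sInf_le ⟨A', B', C', h1, h2, h3, rfl, h4⟩
  obtain ⟨d, hdM, hdeq⟩ := hdvd'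
  have hdap := (mem_iff d).1 hdM
  have ha : 0 < A → ¬(6 ≤ d ∧ ap ((d - 6) % 6) ≤ d - 6) := by
    rintro hA0 ⟨h6, hm⟩
    have hdv : McNDvd x (6 * (A - 1) + 9 * B + 20 * C) :=
      ⟨d - 6, (mem_iff _).2 hm, by omega⟩
    have := hmin (A - 1) B C (by omega) hB hC hdv
    omega
  have hbm : 0 < B → ¬(9 ≤ d ∧ ap ((d - 9) % 6) ≤ d - 9) := by
    rintro hB0 ⟨h9, hm⟩
    have hdv : McNDvd x (6 * A + 9 * (B - 1) + 20 * C) :=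
      ⟨d - 9, (mem_iff _).2 hm, by omega⟩
    have := hmin A (B - 1) C hA (by omega) hC hdv
    omega
  have hcm : 0 < C → ¬(20 ≤ d ∧ ap ((d - 20) % 6) ≤ d - 20) := by
    rintro hC0 ⟨h20, hm⟩
    have hdv : McNDvd x (6 * A + 9 * B + 20 * (C - 1)) :=
      ⟨d - 20, (mem_iff _).2 hm, by omega⟩
    have := hmin A B (C - 1) hA hB (by omega) hdv
    omega
  have hclaim := claim x A B C d ((mem_iff x).1 hx) hx0 hx6 hx12 hdap hdeq ha hbm hcm
  have hF : A + B + C ≤ Fx x := by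
    have := six_F x
    omega
  obtain ⟨gA, hgA, hgAs⟩ := exists_sub t af A hA
  obtain ⟨gB, hgB, hgBs⟩ := exists_sub t bf B hB
  obtain ⟨gC, hgC, hgCs⟩ := exists_sub t cf C hC
  set T : Finset (Fin t) := Finset.univ.filter (fun i => 0 < gA i + gB i + gC i) with hTdef
  have hTcard : T.card ≤ A + B + C := by
    calc T.card = ∑ _i ∈ T, 1 := Finset.card_eq_sum_ones T
      _ ≤ ∑ i ∈ T, (gA i + gB i + gC i) := by
          refine Finset.sum_le_sum fun i hi => ?_
          rw [hTdef, Finset.mem_filter] at hi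
          omega
      _ ≤ ∑ i, (gA i + gB i + gC i) :=
          Finset.sum_le_sum_of_subset (Finset.filter_subset _ _)
      _ = A + B + C := by
          rw [Finset.sum_add_distrib, Finset.sum_add_distrib, hgAs, hgBs, hgCs]
  have hzero : ∀ i ∈ Finset.univ, i ∉ T → 6 * gA i + 9 * gB i + 20 * gC i = 0 := by
    intro i _ hiT
    rw [hTdef, Finset.mem_filter] at hiT
    push_neg at hiT
    have := hiT (Finset.mem_univ i)
    omega
  have hgsum : ∑ i ∈ T, (6 * gA i + 9 * gB i + 20 * gC i) = 6 * A + 9 * B + 20 * C := by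
    rw [Finset.sum_subset (Finset.filter_subset _ Finset.univ) hzero]
    rw [Finset.sum_add_distrib, Finset.sum_add_distrib, ← Finset.mul_sum, ← Finset.mul_sum,
      ← Finset.mul_sum, hgAs, hgBs, hgCs]
  have hTsum : ∑ i ∈ T, f i = (6 * A + 9 * B + 20 * C) +
      ∑ i ∈ T, (6 * (af i - gA i) + 9 * (bf i - gB i) + 20 * (cf i - gC i)) := by
    rw [← hgsum, ← Finset.sum_add_distrib]
    refine Finset.sum_congr rfl fun i _ => ?_
    have h1 := hfe i
    have h2 := hgA i
    have h3 := hgB i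
    have h4 := hgC i
    omega
  have hRM : (∑ i ∈ T, (6 * (af i - gA i) + 9 * (bf i - gB i) + 20 * (cf i - gC i))) ∈ McN := by
    refine ⟨∑ i ∈ T, (af i - gA i), ∑ i ∈ T, (bf i - gB i), ∑ i ∈ T, (cf i - gC i), ?_⟩
    rw [Finset.mul_sum, Finset.mul_sum, Finset.mul_sum, ← Finset.sum_add_distrib,
      ← Finset.sum_add_distrib]
  refine ⟨T, le_trans hTcard hF, d + ∑ i ∈ T, (6 * (af i - gA i) + 9 * (bf i - gB i) +
    20 * (cf i - gC i)), mcn_add hdM hRM, by rw [hTsum]; omega⟩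

lemma lb (x : ℕ) (m : ℕ) (hm : OmegaBound x m) : Fx x ≤ m := by
  have hsum : (∑ _i : Fin (Fx x), 6) = x + msx x := by
    simp [Finset.sum_const, Finset.card_univ]
    have := six_F x
    omega
  obtain ⟨T, hT, z, hz, hzeq⟩ := hm (Fx x) (fun _ => 6)
    (fun i => ⟨1, 0, 0, by norm_num⟩) ⟨msx x, mem_msx x, hsum⟩
  have hsumT : (∑ _i ∈ T, (6 : ℕ)) = 6 * T.card := by
    rw [Finset.sum_const, smul_eq_mul]; omega
  rw [hsumT] at hzeq
  have hzap := (mem_iff z).1 hz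
  have h6F := six_F x
  rcases msx_cases x with ⟨h1, h2⟩ | ⟨h1, h2⟩ | ⟨h1, h2⟩ | ⟨h1, h2⟩ | ⟨h1, h2⟩ | ⟨h1, h2⟩ <;>
    rw [h2] at h6F
  · omega
  · have hz6 : z % 6 = 5 := by omega
    rw [hz6] at hzap; simp [ap] at hzap; omega
  · have hz6 : z % 6 = 4 := by omega
    rw [hz6] at hzap; simp [ap] at hzap; omega
  · have hz6 : z % 6 = 3 := by omega
    rw [hz6] at hzap; simp [ap] at hzap; omega
  · have hz6 : z % 6 = 2 := by omega
    rw [hz6] at hzap; simp [ap] at hzap; omega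
  · have hz6 : z % 6 = 1 := by omega
    rw [hz6] at hzap; simp [ap] at hzap; omega

lemma omega_eq_s19 (x : ℕ) (hx : x ∈ McN) (hx0 : x ≠ 0) (hx6 : x ≠ 6) (hx12 : x ≠ 12) :
    omegaMcN x = Fx x := by
  unfold omegaMcN
  apply le_antisymm
  · exact Nat.sInf_le (ub x hx hx0 hx6 hx12)
  · exact le_csInf ⟨Fx x, ub x hx hx0 hx6 hx12⟩ (fun m hm => lb x m hm)

lemma six_le (x : ℕ) (hx : x ∈ McN) (hx0 : x ≠ 0) : 6 ≤ x := by
  have hx' := (mem_iff x).1 hx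
  rcases msx_cases x with ⟨h1, _⟩ | ⟨h1, _⟩ | ⟨h1, _⟩ | ⟨h1, _⟩ | ⟨h1, _⟩ | ⟨h1, _⟩ <;>
    rw [h1] at hx' <;> simp [ap] at hx' <;> omega

theorem mcnugget_omega :
    (∀ x ∈ McN, x ≠ 0 → x ≠ 6 → x ≠ 12 → omegaMcN (x + 6) = omegaMcN x + 1) ∧
    (∀ x ∈ McN, x ≠ 0 → x ≠ 6 → x ≠ 12 → ∀ q r : ℕ, x = 6 * q + r → r < 6 →
      omegaMcN x = if r = 0 then q
        else if r = 1 then q + 5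
        else if r = 2 then q + 7
        else if r = 3 then q + 2
        else if r = 4 then q + 4
        else q + 9) := by
  constructor
  · intro x hx hx0 hx6 hx12
    have hge := six_le x hx hx0
    have hx6M : x + 6 ∈ McN := by
      obtain ⟨a, b, c, h⟩ := hx
      exact ⟨a + 1, b, c, by omega⟩
    rw [omega_eq_s19 x hx hx0 hx6 hx12,
      omega_eq_s19 (x + 6) hx6M (by omega) (by omega) (by omega)]
    have h1 := six_F x
    have h2 := six_F (x + 6)
    have h3 : msx (x + 6) = msx x := by
      show ap ((6 - (x + 6) % 6) % 6) = ap ((6 - x % 6) % 6)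
      rw [Nat.add_mod_right]
    omega
  · intro x hx hx0 hx6 hx12 q r hqr hr
    rw [omega_eq_s19 x hx hx0 hx6 hx12]
    have h6F := six_F x
    rcases msx_cases x with ⟨h1, h2⟩ | ⟨h1, h2⟩ | ⟨h1, h2⟩ | ⟨h1, h2⟩ | ⟨h1, h2⟩ | ⟨h1, h2⟩ <;>
      rw [h2] at h6F
    · have hr0 : r = 0 := by omega
      subst hr0; norm_num; omega
    · have hr1 : r = 1 := by omega
      subst hr1; norm_num; omega
    · have hr2 : r = 2 := by omega
      subst hr2; norm_num; omega
    · have hr3 : r = 3 := by omega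
      subst hr3; norm_num; omega
    · have hr4 : r = 4 := by omega
      subst hr4; norm_num; omega
    · have hr5 : r = 5 := by omega
      subst hr5; norm_num; omega
end
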